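/- arXiv:math/0609118 — 8 statements merged into one kernel-verified Lean document; each statement's English description precedes it below -/
import Mathlib

section
/- Let d ≥ 1, r ≥ 3 and e_1, …, e_r be integers with 2 ≤ e_i ≤ d for all i and 2d − 2 = Σ_{i=1}^r (e_i − 1). Then for every Hurwitz factorization (σ_1, …, σ_r) for (d, r, 0, (e_1, …, e_r)), the subgroup G of S_d generated by σ_1, …, σ_r acts primitively on {1, …, d}: the action is transitive and there is no partition of {1, …, d} into blocks permuted by G other than the partition into singletons and the partition with a single block. -/
/-- A Hurwitz factorization for `(d, r, 0, (e 0, …, e (r-1)))`. -/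
def HurwitzFactorization (d r : ℕ) (e : Fin r → ℕ)
    (σ : Fin r → Equiv.Perm (Fin d)) : Prop :=
  (∀ i, (σ i).IsCycle ∧ (σ i).support.card = e i) ∧
  (List.ofFn σ).prod = 1 ∧
  ∀ x y : Fin d, ∃ g ∈ Subgroup.closure (Set.range σ), g x = y

/-!
Suppose the monodromy group preserves an equivalence relation with `n ≥ 2` classes (blocks) of
size `m ≥ 2`, so `d = m n`. The `σ i` induce permutations `τ i` of the blocks, again with product
`1` and generating a transitive group, so Ree's inequality (the Riemann–Hurwitz bound
"genus ≥ 0") gives `∑ ind (τ i) ≥ 2 n - 2`, where `ind` is the number of points minus the number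
of cycles. The cycle `σ i` moves every point of every block moved by `τ i`, so
`e i ≥ m (ind (τ i) + 1)` when `τ i ≠ 1`, and at least two `τ i` are nontrivial since their
product is `1`. Summing, `∑ (e i - 1) ≥ 2 d + r - 4`, which contradicts
`∑ (e i - 1) = 2 d - 2` once `r ≥ 3`.

Ree's inequality is proved by writing each permutation as a product of `ind` transpositions and
adding them one at a time: multiplying by `(a b)` merges the cycles of `a` and `b` if they are
distinct and splits their common cycle otherwise, while adding `(a b)` to the generators merges
the orbits of `a` and `b`. Both operations are instances of gluing two classes of a setoid.
-/

open Equiv MulAction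

namespace Setoid

variable {α : Type*} (s : Setoid α) {t : Setoid α} {a b : α}

open Classical in
/-- Merges the classes of `a` and `b`, as the kernel of the map sending the class of `b` to that
of `a`. -/
noncomputable def glue (a b : α) : Setoid α :=
  ker fun x => if s x b then Quotient.mk s a else Quotient.mk s x

open Classical in
theorem glue_iff {x y : α} : s.glue a b x y ↔
    (if s x b then Quotient.mk s a else Quotient.mk s x) =
      (if s y b then Quotient.mk s a else Quotient.mk s y) := ker_def

theorem le_glue : s ≤ s.glue a b := by
  rw [le_def]
  intro x y h
  rw [glue_iff]
  have hb : s x b ↔ s y b := ⟨fun hx => s.trans (s.symm h) hx, fun hy => s.trans h hy⟩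
  split_ifs with hx hy hy
  · rfl
  · exact absurd (hb.1 hx) hy
  · exact absurd (hb.2 hy) hx
  · exact Quotient.sound h

theorem glue_rel : s.glue a b a b := by
  rw [glue_iff, if_pos (s.refl b)]
  split_ifs <;> rfl

theorem glue_le (hst : s ≤ t) (hab : t a b) : s.glue a b ≤ t := by
  rw [le_def]
  intro x y h
  rw [glue_iff] at h
  split_ifs at h with hx hy hy
  · exact t.trans (hst hx) (t.symm (hst hy))
  · exact t.trans (hst hx) (t.trans (t.symm hab) (hst (Quotient.exact h)))
  · exact t.trans (hst (Quotient.exact h)) (t.trans hab (t.symm (hst hy)))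
  · exact hst (Quotient.exact h)

theorem glue_eq_self (hab : s a b) : s.glue a b = s :=
  le_antisymm (s.glue_le le_rfl hab) s.le_glue

theorem card_quotient_glue_add_one [Finite α] (hab : ¬ s a b) :
    Nat.card (Quotient (s.glue a b)) + 1 = Nat.card (Quotient s) := by
  classical
  have hrange : Set.range (fun x => if s x b then Quotient.mk s a else Quotient.mk s x) =
      {Quotient.mk s b}ᶜ := by
    ext q
    induction q using Quotient.inductionOn with | h y => ?_
    simp only [Set.mem_range, Set.mem_compl_singleton_iff, ne_eq, Quotient.eq]
    constructor
    · rintro ⟨x, hx⟩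
      split_ifs at hx with hxb
      · exact fun hyb => hab (s.trans (Quotient.exact hx) hyb)
      · exact fun hyb => hxb (s.trans (Quotient.exact hx) hyb)
    · intro hyb
      exact ⟨y, if_neg hyb⟩
  rw [glue, Nat.card_congr (quotientKerEquivRange _), hrange, Nat.card_coe_set_eq,
    ← Set.ncard_add_ncard_compl {Quotient.mk s b}, Set.ncard_singleton, add_comm]

def classStabilizer : Subgroup (Perm α) where
  carrier := {g | ∀ x, s (g x) x}
  one_mem' x := s.refl x
  mul_mem' hg hh x := s.trans (hg _) (hh x)
  inv_mem' {g} hg x := s.symm (by simpa using hg (g⁻¹ x))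

theorem classStabilizer_mono (hst : s ≤ t) : s.classStabilizer ≤ t.classStabilizer :=
  fun _ hg x => hst (hg x)

theorem swap_mem_classStabilizer [DecidableEq α] (hab : s a b) :
    swap a b ∈ s.classStabilizer := by
  intro x
  rcases eq_or_ne x a with rfl | hxa
  · simpa using s.symm hab
  rcases eq_or_ne x b with rfl | hxb
  · simpa using hab
  simp [swap_apply_of_ne_of_ne hxa hxb]

end Setoid

namespace Equiv.Perm

open Subgroup

variable {α : Type*} {H K : Subgroup (Perm α)} {s : Setoid α} {g : Perm α} {a b : α}

theorem orbitRel_le_iff : orbitRel H α ≤ s ↔ H ≤ s.classStabilizer := by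
  constructor
  · intro h g hg x
    exact h (mem_orbit_iff.2 ⟨⟨g, hg⟩, rfl⟩ : orbitRel H α (g x) x)
  · intro h
    rw [Setoid.le_def]
    rintro x y ⟨g, rfl⟩
    exact h g.2 y

theorem le_classStabilizer_orbitRel : H ≤ (orbitRel H α).classStabilizer :=
  orbitRel_le_iff.1 le_rfl

theorem orbitRel_mono (h : H ≤ K) : orbitRel H α ≤ orbitRel K α :=
  orbitRel_le_iff.2 (h.trans le_classStabilizer_orbitRel)

theorem orbitRel_zpowers_iff {x y : α} : orbitRel (zpowers g) α x y ↔ g.SameCycle x y := by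
  rw [orbitRel_apply, mem_orbit_iff, sameCycle_comm]
  constructor
  · rintro ⟨⟨_, i, rfl⟩, h⟩
    exact ⟨i, h⟩
  · rintro ⟨i, h⟩
    exact ⟨⟨g ^ i, i, rfl⟩, h⟩

theorem SameCycle.exists_pow_lt_of_pow_apply_eq_self {m : ℕ} (hm : 0 < m)
    (ha : (g ^ m) a = a) {y : α} (h : g.SameCycle a y) : ∃ j < m, (g ^ j) a = y := by
  obtain ⟨i, rfl⟩ := h
  have hm' : (0 : ℤ) < m := by exact_mod_cast hm
  have hi : ((i % m).toNat : ℤ) = i % m := Int.toNat_of_nonneg (Int.emod_nonneg _ hm'.ne')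
  refine ⟨(i % m).toNat, by have := Int.emod_lt_of_pos i hm'; omega, ?_⟩
  have ha' : (g ^ (m : ℤ)) a = a := by rwa [zpow_natCast]
  rw [← zpow_natCast, hi]
  conv_rhs => rw [← Int.emod_add_mul_ediv i m, zpow_add, zpow_mul, mul_apply,
    zpow_apply_eq_self_of_apply_eq_self ha']

/-- Let `m > 0` be least with `(g ^ m) a ∈ {a, b}`. Up to `m`, the orbits of `a` under `g` and
under `swap a b * g` agree, and at step `m` exactly one of them reaches `b`. -/
theorem sameCycle_swap_mul_iff [Finite α] [DecidableEq α] (hab : a ≠ b) :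
    (swap a b * g).SameCycle a b ↔ ¬ g.SameCycle a b := by
  classical
  have hex : ∃ m, 0 < m ∧ ((g ^ m) a = a ∨ (g ^ m) a = b) :=
    ⟨orderOf g, orderOf_pos g, Or.inl (by rw [pow_orderOf_eq_one, one_apply])⟩
  obtain ⟨hm, hma⟩ := Nat.find_spec hex
  set m := Nat.find hex
  have hmin : ∀ j, 0 < j → j < m → (g ^ j) a ≠ a ∧ (g ^ j) a ≠ b := fun j hj hjm => by
    simpa [not_or, hj] using Nat.find_min hex hjm
  have hne_b : ∀ j < m, (g ^ j) a ≠ b := fun j hjm => by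
    rcases j.eq_zero_or_pos with rfl | hj
    · exact hab
    · exact (hmin j hj hjm).2
  have hagree : ∀ j < m, ((swap a b * g) ^ j) a = (g ^ j) a := by
    intro j
    induction j with
    | zero => simp
    | succ j ih =>
      intro hj
      obtain ⟨h1, h2⟩ := hmin (j + 1) j.succ_pos hj
      rw [pow_succ', mul_apply, ih (by omega), mul_apply, ← mul_apply g, ← pow_succ',
        swap_apply_of_ne_of_ne h1 h2]
  have hlast : ((swap a b * g) ^ m) a = swap a b ((g ^ m) a) := by
    obtain ⟨j, hj⟩ : ∃ j, m = j + 1 := ⟨m - 1, by omega⟩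
    rw [hj, pow_succ', mul_apply, hagree j (by omega), mul_apply, ← mul_apply g, ← pow_succ']
  rcases hma with hma | hmb
  · have hsc : (swap a b * g).SameCycle a b :=
      ⟨m, by rw [zpow_natCast, hlast, hma, swap_apply_left]⟩
    refine iff_of_true hsc fun h => ?_
    obtain ⟨j, hjm, hj⟩ := h.exists_pow_lt_of_pow_apply_eq_self hm hma
    exact hne_b j hjm hj
  · refine iff_of_false (fun h => ?_) (not_not.2 ⟨m, by rw [zpow_natCast, hmb]⟩)
    have hper : ((swap a b * g) ^ m) a = a := by rw [hlast, hmb, swap_apply_right]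
    obtain ⟨j, hjm, hj⟩ := h.exists_pow_lt_of_pow_apply_eq_self hm hper
    exact hne_b j hjm (hagree j hjm ▸ hj)

noncomputable def numOrbits (H : Subgroup (Perm α)) : ℕ := Nat.card (orbitRel.Quotient H α)

noncomputable def numCycles (g : Perm α) : ℕ := numOrbits (zpowers g)

/-- The index `v(g)` of the Riemann–Hurwitz formula; a cycle of length `e` has index `e - 1`. -/
noncomputable def ind (g : Perm α) : ℕ := Nat.card α - numCycles g

theorem numOrbits_bot : numOrbits (⊥ : Subgroup (Perm α)) = Nat.card α := by
  have h : orbitRel (⊥ : Subgroup (Perm α)) α = ⊥ := le_bot_iff.1 (orbitRel_le_iff.2 bot_le)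
  exact Nat.card_congr ((Quotient.congrRight (by rw [h]; exact fun _ _ => Iff.rfl)).trans
    Setoid.quotientBotEquiv)

theorem numOrbits_le_card [Finite α] : numOrbits H ≤ Nat.card α :=
  Nat.card_le_card_of_surjective _ Quotient.mk_surjective

theorem numOrbits_anti [Finite α] (h : H ≤ K) : numOrbits K ≤ numOrbits H :=
  Nat.card_le_card_of_surjective (Setoid.map_of_le (orbitRel_mono h))
    (by rintro ⟨x⟩; exact ⟨Quotient.mk _ x, rfl⟩)

theorem numOrbits_le_one [Finite α] (htrans : ∀ x y : α, ∃ g ∈ H, g x = y) :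
    numOrbits H ≤ 1 := by
  refine Finite.card_le_one_iff_subsingleton.2 ⟨fun p q => ?_⟩
  induction p using Quotient.inductionOn with | h x => ?_
  induction q using Quotient.inductionOn with | h y => ?_
  obtain ⟨g, hg, rfl⟩ := htrans y x
  exact Quotient.sound (mem_orbit_iff.2 ⟨⟨g, hg⟩, rfl⟩)

theorem numCycles_one : numCycles (1 : Perm α) = Nat.card α := by
  rw [numCycles, zpowers_one_eq_bot, numOrbits_bot]

theorem ind_one : ind (1 : Perm α) = 0 := by
  rw [ind, numCycles_one, Nat.sub_self]

variable [DecidableEq α]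

theorem glue_orbitRel_le (h : H ≤ K ⊔ zpowers (swap a b)) :
    (orbitRel H α).glue a b ≤ (orbitRel K α).glue a b := by
  refine Setoid.glue_le _ (orbitRel_le_iff.2 (h.trans (sup_le ?_ ?_))) (Setoid.glue_rel _)
  · exact le_classStabilizer_orbitRel.trans (Setoid.classStabilizer_mono _ (Setoid.le_glue _))
  · exact zpowers_le.2 (Setoid.swap_mem_classStabilizer _ (Setoid.glue_rel _))

theorem numOrbits_add_one [Finite α] (h₁ : H ≤ K ⊔ zpowers (swap a b))
    (h₂ : K ≤ H ⊔ zpowers (swap a b)) (hH : orbitRel H α a b) (hK : ¬ orbitRel K α a b) :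
    numOrbits H + 1 = numOrbits K := by
  rw [numOrbits, numOrbits, orbitRel.Quotient, ← Setoid.glue_eq_self _ hH,
    le_antisymm (glue_orbitRel_le h₁) (glue_orbitRel_le h₂)]
  exact Setoid.card_quotient_glue_add_one _ hK

theorem numOrbits_eq (h₁ : H ≤ K ⊔ zpowers (swap a b)) (h₂ : K ≤ H ⊔ zpowers (swap a b))
    (hH : orbitRel H α a b) (hK : orbitRel K α a b) : numOrbits H = numOrbits K := by
  rw [numOrbits, numOrbits, orbitRel.Quotient, orbitRel.Quotient, ← Setoid.glue_eq_self _ hH,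
    ← Setoid.glue_eq_self _ hK, le_antisymm (glue_orbitRel_le h₁) (glue_orbitRel_le h₂)]

theorem numCycles_swap_mul_add_one [Finite α] (hab : a ≠ b) (h : ¬ g.SameCycle a b) :
    numCycles (swap a b * g) + 1 = numCycles g := by
  refine numOrbits_add_one ?_ ?_ (orbitRel_zpowers_iff.2 ((sameCycle_swap_mul_iff hab).2 h))
    (by rwa [orbitRel_zpowers_iff])
  · exact zpowers_le.2 (mul_mem (mem_sup_right (mem_zpowers _)) (mem_sup_left (mem_zpowers _)))
  · have h := mul_mem (mem_sup_right (mem_zpowers (swap a b)))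
      (mem_sup_left (mem_zpowers (swap a b * g)))
    rw [swap_mul_self_mul] at h
    exact zpowers_le.2 h

theorem numCycles_add_one_swap_mul [Finite α] (hab : a ≠ b) (h : g.SameCycle a b) :
    numCycles g + 1 = numCycles (swap a b * g) := by
  have := numCycles_swap_mul_add_one (g := swap a b * g) hab
    (by rwa [sameCycle_swap_mul_iff hab, not_not])
  rwa [swap_mul_self_mul] at this

theorem numCycles_swap_mul_le [Finite α] (hab : a ≠ b) :
    numCycles (swap a b * g) ≤ numCycles g + 1 := by
  by_cases h : g.SameCycle a b
  · exact (numCycles_add_one_swap_mul hab h).ge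
  · have := numCycles_swap_mul_add_one hab h
    omega

/-- The fixed points and one moved point lie in distinct cycles. -/
theorem card_lt_numCycles_add_card_support [Fintype α] (hg : g ≠ 1) :
    Fintype.card α < numCycles g + g.support.card := by
  obtain ⟨a, ha⟩ : ∃ a, g a ≠ a := by simpa [Equiv.ext_iff] using hg
  have hinj : Function.Injective fun x : (insert a g.supportᶜ : Finset α) =>
      (Quotient.mk _ x : orbitRel.Quotient (zpowers g) α) := by
    rintro ⟨x, hx⟩ ⟨y, hy⟩ hxy
    have hsc : g.SameCycle x y := orbitRel_zpowers_iff.1 (Quotient.exact hxy)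
    simp only [Finset.mem_insert, Finset.mem_compl, mem_support, not_not] at hx hy
    rw [Subtype.mk.injEq]
    rcases hx with rfl | hx
    · rcases hy with rfl | hy
      · rfl
      · exact hsc.eq_of_right hy
    · exact hsc.eq_of_left hx
  have hcard := Nat.card_le_card_of_injective _ hinj
  rw [Nat.card_eq_fintype_card, Fintype.card_coe, Finset.card_insert_of_notMem
    (by simpa using ha), Finset.card_compl] at hcard
  have := g.support.card_le_univ
  exact Nat.lt_of_lt_of_le (by omega) (Nat.add_le_add_right hcard _)

theorem ind_lt_card_support [Fintype α] (hg : g ≠ 1) : g.ind < g.support.card := by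
  have := card_lt_numCycles_add_card_support hg
  have : numCycles g ≤ Nat.card α := numOrbits_le_card
  rw [ind, Nat.card_eq_fintype_card] at *
  omega

theorem exists_isSwap_list_prod_eq [Finite α] (g : Perm α) :
    ∃ W : List (Perm α), (∀ τ ∈ W, τ.IsSwap) ∧ W.prod = g ∧
      W.length + numCycles g = Nat.card α := by
  by_cases hg : g = 1
  · exact ⟨[], by simp, by simp [hg], by simp [hg, numCycles_one]⟩
  obtain ⟨a, ha⟩ : ∃ a, g a ≠ a := by simpa [Equiv.ext_iff] using hg
  have hsplit := numCycles_add_one_swap_mul (Ne.symm ha) (g := g) ⟨1, rfl⟩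
  have hle : numCycles (swap a (g a) * g) ≤ Nat.card α := numOrbits_le_card
  obtain ⟨W, hW, hprod, hlen⟩ := exists_isSwap_list_prod_eq (swap a (g a) * g)
  refine ⟨swap a (g a) :: W, List.forall_mem_cons.2 ⟨⟨a, g a, Ne.symm ha, rfl⟩, hW⟩,
    by rw [List.prod_cons, hprod, swap_mul_self_mul], ?_⟩
  rw [List.length_cons]
  omega
termination_by Nat.card α - numCycles g
decreasing_by omega

theorem card_add_numCycles_prod_le_of_isSwap [Finite α] (W : List (Perm α))
    (hW : ∀ τ ∈ W, τ.IsSwap) :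
    Nat.card α + numCycles W.prod ≤ W.length + 2 * numOrbits (closure {g | g ∈ W}) := by
  induction W with
  | nil => simp [numCycles_one, numOrbits_bot, two_mul]
  | cons τ W ih =>
    obtain ⟨⟨a, b, hab, rfl⟩, hW'⟩ := List.forall_mem_cons.1 hW
    have hset : {g | g ∈ swap a b :: W} = insert (swap a b) {g | g ∈ W} := by
      ext; simp
    have h₁ : closure (insert (swap a b) {g | g ∈ W}) ≤
        closure {g | g ∈ W} ⊔ zpowers (swap a b) := by
      rw [closure_le, Set.insert_subset_iff]
      exact ⟨mem_sup_right (mem_zpowers _),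
        subset_closure.trans (SetLike.coe_subset_coe.2 le_sup_left)⟩
    have h₂ : closure {g | g ∈ W} ≤ closure (insert (swap a b) {g | g ∈ W}) ⊔ zpowers (swap a b) :=
      (Subgroup.closure_mono (Set.subset_insert _ _)).trans le_sup_left
    have hab_rel : orbitRel (closure (insert (swap a b) {g | g ∈ W})) α a b :=
      mem_orbit_iff.2 ⟨⟨swap a b, subset_closure (Set.mem_insert _ _)⟩, swap_apply_right a b⟩
    have hprod : W.prod ∈ closure {g | g ∈ W} := list_prod_mem fun g hg => subset_closure hg
    have := ih hW'
    rw [List.prod_cons, hset, List.length_cons]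
    by_cases hrel : orbitRel (closure {g | g ∈ W}) α a b
    · have := numOrbits_eq h₁ h₂ hab_rel hrel
      have := numCycles_swap_mul_le hab (g := W.prod)
      omega
    · have := numOrbits_add_one h₁ h₂ hab_rel hrel
      have hsc : ¬ W.prod.SameCycle a b := fun hsc =>
        hrel (orbitRel_mono (zpowers_le.2 hprod) (orbitRel_zpowers_iff.2 hsc))
      have := numCycles_swap_mul_add_one hab hsc
      omega

/-- Ree's inequality. -/
theorem card_add_numCycles_prod_le [Finite α] (l : List (Perm α)) :
    Nat.card α + numCycles l.prod ≤ (l.map ind).sum + 2 * numOrbits (closure {g | g ∈ l}) := by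
  choose F hFswap hFprod hFlen using exists_isSwap_list_prod_eq (α := α)
  set W := (l.map F).flatten
  have hW : ∀ τ ∈ W, τ.IsSwap := by
    simp only [W, List.mem_flatten, List.mem_map]
    rintro τ ⟨_, ⟨g, -, rfl⟩, hτ⟩
    exact hFswap g τ hτ
  have hWprod : W.prod = l.prod := by
    simp [W, List.prod_flatten, Function.comp_def, hFprod]
  have hWlen : W.length = (l.map ind).sum := by
    simp only [W, List.length_flatten, List.map_map]
    congr 1
    refine List.map_congr_left fun g _ => ?_
    have := hFlen g
    simp only [Function.comp_apply, ind]
    omega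
  have hclosure : closure {g | g ∈ l} ≤ closure {g | g ∈ W} := by
    refine (closure_le _).2 fun g hg => ?_
    rw [← hFprod g]
    exact list_prod_mem fun τ hτ =>
      subset_closure (List.mem_flatten.2 ⟨F g, List.mem_map_of_mem hg, hτ⟩)
  have := card_add_numCycles_prod_le_of_isSwap W hW
  have := numOrbits_anti hclosure
  rw [hWprod, hWlen] at *
  omega

theorem two_mul_card_le_sum_ind_add_two [Fintype α] {r : ℕ} (σ : Fin r → Perm α)
    (hprod : (List.ofFn σ).prod = 1) (htrans : ∀ x y : α, ∃ g ∈ closure (Set.range σ), g x = y) :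
    2 * Fintype.card α ≤ ∑ i, ind (σ i) + 2 := by
  have hRee := card_add_numCycles_prod_le (List.ofFn σ)
  rw [show {g | g ∈ List.ofFn σ} = Set.range σ from Set.ext fun _ => List.mem_ofFn, hprod,
    numCycles_one, List.map_ofFn, List.sum_ofFn, Nat.card_eq_fintype_card] at hRee
  have := numOrbits_le_one htrans
  simp only [Function.comp_apply] at hRee
  omega

end Equiv.Perm

namespace Setoid

open Finset Subgroup

variable {α : Type*} (s : Setoid α)

theorem exists_rel_ne_of_ne_bot (h : s ≠ ⊥) : ∃ x y, s x y ∧ x ≠ y := by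
  by_contra! h'
  exact h (le_bot_iff.1 fun {x y} hxy => by rw [bot_def]; exact h' x y hxy)

def invariantSubgroup : Subgroup (Perm α) where
  carrier := {g | ∀ x y, s (g x) (g y) ↔ s x y}
  one_mem' _ _ := Iff.rfl
  mul_mem' hg hh x y := (hg _ _).trans (hh x y)
  inv_mem' {g} hg x y := by simpa using (hg (g⁻¹ x) (g⁻¹ y)).symm

theorem le_invariantSubgroup {G : Subgroup (Perm α)}
    (hG : ∀ g ∈ G, ∀ x y, s x y → s (g x) (g y)) : G ≤ s.invariantSubgroup :=
  fun g hg x y => ⟨fun h => by simpa using hG g⁻¹ (inv_mem hg) _ _ h, hG g hg x y⟩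

def quotientPermHom : s.invariantSubgroup →* Perm (Quotient s) where
  toFun g := Quotient.congr g.1 fun x y => (g.2 x y).symm
  map_one' := by ext ⟨x⟩; rfl
  map_mul' g h := by ext ⟨x⟩; rfl

@[simp]
theorem quotientPermHom_mk (g : s.invariantSubgroup) (x : α) :
    s.quotientPermHom g (Quotient.mk s x) = Quotient.mk s (g.1 x) := rfl

theorem prod_ofFn_quotientPermHom_eq_one {r : ℕ} (σ : Fin r → s.invariantSubgroup)
    (h : (List.ofFn fun i => (σ i : Perm α)).prod = 1) :
    (List.ofFn fun i => s.quotientPermHom (σ i)).prod = 1 := by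
  have h' : (List.ofFn σ).prod = 1 :=
    Subtype.ext (by simpa [SubmonoidClass.coe_list_prod, List.map_ofFn, Function.comp_def])
  change (List.ofFn (s.quotientPermHom ∘ σ)).prod = 1
  rw [← List.map_ofFn, ← map_list_prod, h', map_one]

theorem exists_mem_closure_quotientPermHom_apply_eq {ι : Type*} (σ : ι → s.invariantSubgroup)
    (htrans : ∀ x y : α, ∃ g ∈ closure (Set.range fun i => (σ i : Perm α)), g x = y)
    (p q : Quotient s) : ∃ h ∈ closure (Set.range fun i => s.quotientPermHom (σ i)), h p = q := by
  obtain ⟨x, rfl⟩ := Quotient.mk_surjective p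
  obtain ⟨y, rfl⟩ := Quotient.mk_surjective q
  obtain ⟨g, hg, rfl⟩ := htrans x y
  rw [← Function.comp_def, Set.range_comp, ← coe_subtype, ← MonoidHom.map_closure] at hg
  obtain ⟨k, hk, rfl⟩ := mem_map.1 hg
  refine ⟨s.quotientPermHom k, ?_, rfl⟩
  rw [← Function.comp_def, Set.range_comp, ← MonoidHom.map_closure]
  exact mem_map_of_mem _ hk

variable [Fintype α] [DecidableRel s]

theorem one_lt_card_quotient (h : s ≠ ⊤) : 1 < Fintype.card (Quotient s) := by
  obtain ⟨x, y, hxy⟩ : ∃ x y, ¬ s x y := by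
    by_contra! h'
    exact h (eq_top_iff.2 h')
  exact Fintype.one_lt_card_iff.2 ⟨_, _, fun h => hxy (Quotient.exact h)⟩

theorem two_le_card_class {x y : α} (hxy : s x y) (hne : x ≠ y) : 2 ≤ #{z | s z x} := by
  classical
  rw [← card_pair hne]
  refine card_le_card fun z hz => ?_
  rcases mem_insert.1 hz with rfl | hz
  · simp
  · simpa [mem_singleton.1 hz] using s.symm hxy

theorem card_class_eq_of_mem_invariantSubgroup {g : Perm α} (hg : g ∈ s.invariantSubgroup)
    (x : α) : #{y | s y (g x)} = #{y | s y x} :=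
  (card_equiv g fun y => by simpa using (hg y x).symm).symm

theorem card_class_eq {H : Subgroup (Perm α)} (hH : H ≤ s.invariantSubgroup)
    (htrans : ∀ x y : α, ∃ g ∈ H, g x = y) (x y : α) : #{z | s z x} = #{z | s z y} := by
  obtain ⟨g, hg, rfl⟩ := htrans x y
  exact (s.card_class_eq_of_mem_invariantSubgroup (hH hg) x).symm

variable {m : ℕ} (hm : ∀ x, #{y | s y x} = m)
include hm

theorem card_preimage_eq_mul (T : Finset (Quotient s)) :
    #{x | Quotient.mk s x ∈ T} = m * #T := by
  rw [card_eq_sum_card_fiberwise (f := Quotient.mk s) (s := {x | Quotient.mk s x ∈ T}) (t := T)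
    fun x hx => (mem_filter.1 hx).2, sum_congr rfl fun q hq => ?_, sum_const, smul_eq_mul,
    mul_comm]
  induction q using Quotient.inductionOn with | h x => ?_
  rw [← hm x]
  congr 1
  ext y
  simp only [mem_filter, mem_univ, true_and, Quotient.eq]
  exact ⟨fun h => h.2, fun h => ⟨Quotient.sound h ▸ hq, h⟩⟩

theorem card_eq_mul_card_quotient : Fintype.card α = m * Fintype.card (Quotient s) := by
  simpa using s.card_preimage_eq_mul hm univ

theorem mul_card_support_quotientPermHom_le [DecidableEq α] (g : s.invariantSubgroup) :
    m * #(s.quotientPermHom g).support ≤ #(g : Perm α).support := by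
  rw [← s.card_preimage_eq_mul hm]
  refine card_le_card fun x hx => ?_
  simp only [mem_filter, mem_univ, true_and, Perm.mem_support] at hx ⊢
  intro hgx
  exact hx (by rw [quotientPermHom_mk, hgx])

theorem mul_ind_quotientPermHom_add_one_le [DecidableEq α] (g : s.invariantSubgroup)
    (hg : s.quotientPermHom g ≠ 1) :
    m * (Perm.ind (s.quotientPermHom g) + 1) ≤ #(g : Perm α).support :=
  (Nat.mul_le_mul_left m (Perm.ind_lt_card_support hg)).trans
    (s.mul_card_support_quotientPermHom_le hm g)

end Setoid

open Finset in
theorem Fin.two_le_card_ne_one_of_prod_ofFn_eq_one {M : Type*} [Monoid M] [DecidableEq M]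
    {r : ℕ} {f : Fin r → M} (hprod : (List.ofFn f).prod = 1) (hf : ∃ i, f i ≠ 1) :
    2 ≤ #{i | f i ≠ 1} := by
  by_contra! hk
  obtain ⟨j, hj⟩ := hf
  have hone : ∀ i ≠ j, f i = 1 := fun i hij => by
    by_contra hi
    exact hij (card_le_one.1 (Nat.le_of_lt_succ hk) i (by simpa using hi) j (by simpa using hj))
  rw [List.ofFn_eq_map, List.prod_map_eq_pow_single j f fun i hij _ => hone i hij,
    List.count_finRange, pow_one] at hprod
  exact hj hprod

open Finset Subgroup Equiv.Perm in
theorem Equiv.Perm.two_mul_card_add_le_sum_card_support {α : Type*} [Fintype α] [DecidableEq α]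
    {r : ℕ} (σ : Fin r → Perm α) (hσ : ∀ i, σ i ≠ 1) (hprod : (List.ofFn σ).prod = 1)
    (htrans : ∀ x y : α, ∃ g ∈ closure (Set.range σ), g x = y)
    (s : Setoid α) (hs : ∀ i, σ i ∈ s.invariantSubgroup) (hbot : s ≠ ⊥) (htop : s ≠ ⊤) :
    2 * (Fintype.card α + r) ≤ ∑ i, #(σ i).support + 4 := by
  classical
  set τ : Fin r → Perm (Quotient s) := fun i => s.quotientPermHom ⟨σ i, hs i⟩
  obtain ⟨x₀, y₀, hxy, hne⟩ := s.exists_rel_ne_of_ne_bot hbot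
  set m := #{y | s y x₀}
  have hm : ∀ x, #{y | s y x} = m := fun x =>
    s.card_class_eq ((closure_le _).2 (Set.range_subset_iff.2 hs)) htrans x x₀
  have hm2 : 2 ≤ m := s.two_le_card_class hxy hne
  have hn := s.one_lt_card_quotient htop
  have hτprod : (List.ofFn τ).prod = 1 := s.prod_ofFn_quotientPermHom_eq_one _ hprod
  have hRee := two_mul_card_le_sum_ind_add_two τ hτprod
    (s.exists_mem_closure_quotientPermHom_apply_eq _ htrans)
  have hk : 2 ≤ #{i | τ i ≠ 1} := by
    refine Fin.two_le_card_ne_one_of_prod_ofFn_eq_one hτprod ?_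
    by_contra! h
    simp only [h, ind_one, sum_const_zero] at hRee
    omega
  have hi : ∀ i, m * ind (τ i) + 2 + (m - 2) * (if τ i ≠ 1 then 1 else 0) ≤ #(σ i).support := by
    intro i
    by_cases h : τ i = 1
    · simpa [h, ind_one] using two_le_card_support_of_ne_one (hσ i)
    · have : m * (ind (τ i) + 1) ≤ #(σ i).support :=
        s.mul_ind_quotientPermHom_add_one_le hm ⟨σ i, hs i⟩ h
      simp only [ne_eq, h, not_false_eq_true, if_true, mul_one]
      rw [mul_add_one] at this
      omega
  have hsum := sum_le_sum fun i (_ : i ∈ univ) => hi i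
  rw [sum_add_distrib, sum_add_distrib, ← mul_sum, ← mul_sum, sum_boole, sum_const, card_univ,
    Fintype.card_fin, smul_eq_mul, Nat.cast_id] at hsum
  have h₁ := Nat.mul_le_mul_left m hRee
  have h₂ := Nat.mul_le_mul_left (m - 2) hk
  rw [mul_add, mul_left_comm] at h₁
  rw [s.card_eq_mul_card_quotient hm]
  omega

theorem hurwitz_monodromy_primitive_general
    (d r : ℕ) (hr : 3 ≤ r) (e : Fin r → ℕ)
    (he : ∀ i, 2 ≤ e i ∧ e i ≤ d)
    (hsum : 2 * d - 2 = ∑ i, (e i - 1))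
    (σ : Fin r → Equiv.Perm (Fin d))
    (hσ : HurwitzFactorization d r e σ) :
    (∀ x y : Fin d, ∃ g ∈ Subgroup.closure (Set.range σ), g x = y) ∧
    ∀ s : Setoid (Fin d),
      (∀ g ∈ Subgroup.closure (Set.range σ), ∀ x y : Fin d, s.r x y → s.r (g x) (g y)) →
      s = ⊥ ∨ s = ⊤ := by
  obtain ⟨hcyc, hprod, htrans⟩ := hσ
  refine ⟨htrans, fun s hs => ?_⟩
  by_contra! hs_triv
  have hinv := s.le_invariantSubgroup hs
  have hbound := Equiv.Perm.two_mul_card_add_le_sum_card_support σ (fun i => (hcyc i).1.ne_one)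
    hprod htrans s (fun i => hinv (Subgroup.subset_closure ⟨i, rfl⟩)) hs_triv.1 hs_triv.2
  simp only [(hcyc _).2, Fintype.card_fin] at hbound
  have hsum_e : ∑ i, e i = ∑ i, (e i - 1) + r := calc
    ∑ i, e i = ∑ i, (e i - 1 + 1) := Finset.sum_congr rfl fun i _ => by have := (he i).1; omega
    _ = ∑ i, (e i - 1) + r := by simp [Finset.sum_add_distrib]
  have hd := he ⟨0, by omega⟩
  omega

/-- For `r ≥ 3`, the group generated by a genus-0 pure-cycle Hurwitz factorization
acts primitively on `{1, …, d}`: the action is transitive, and the only invariant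
equivalence relations (block systems) are the trivial ones (`⊥` is the partition into
singletons, `⊤` the partition with a single block). -/
theorem hurwitz_monodromy_primitive
    (d r : ℕ) (hd : 1 ≤ d) (hr : 3 ≤ r) (e : Fin r → ℕ)
    (he : ∀ i, 2 ≤ e i ∧ e i ≤ d)
    (hsum : 2 * d - 2 = ∑ i, (e i - 1))
    (σ : Fin r → Equiv.Perm (Fin d))
    (hσ : HurwitzFactorization d r e σ) :
    (∀ x y : Fin d, ∃ g ∈ Subgroup.closure (Set.range σ), g x = y) ∧
    ∀ s : Setoid (Fin d),
      (∀ g ∈ Subgroup.closure (Set.range σ), ∀ x y : Fin d, s.r x y → s.r (g x) (g y)) →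
      s = ⊥ ∨ s = ⊤ :=
  hurwitz_monodromy_primitive_general d r hr e he hsum σ hσ
end

section
/- Assume Situation (*): d > 0 and 2 ≤ e_1 ≤ e_2 ≤ e_3 ≤ e_4 ≤ d with 2d − 2 = Σ_{i=1}^4 (e_i − 1). Suppose σ_1, σ_2, σ_3, σ_4 ∈ S_d are single cycles of lengths e_1, e_2, e_3, e_4 respectively with σ_1 σ_2 σ_3 σ_4 = 1. Then the following are equivalent: (a) σ_1, σ_2, σ_3, σ_4 generate a transitive subgroup of S_d (i.e., they form a Hurwitz factorization for (d, 4, 0, (e_1, e_2, e_3, e_4))); (b) every number in {1, …, d} is in the support of at least one of the σ_i; (c) either there is exactly one number k in the support of all four σ_i and every other number of {1, …, d} is in the support of exactly two of the σ_i, or there are exactly two distinct numbers k ≠ ℓ each in the support of exactly three of the σ_i and every other number of {1, …, d} is in the support of exactly two of the σ_i. -/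
/-- The number of indices `i` such that `x` lies in the support of `σ i`. -/
def repCount {d r : ℕ} (σ : Fin r → Equiv.Perm (Fin d)) (x : Fin d) : ℕ :=
  (Finset.univ.filter fun i => x ∈ (σ i).support).card

/-- A point moved by some cycle must be moved by at least two of them,
    since the product of the four cycles is the identity. -/
lemma repCount_ne_one {d : ℕ} (σ : Fin 4 → Equiv.Perm (Fin d))
    (hprod : (List.ofFn σ).prod = 1) (x : Fin d) : repCount σ x ≠ 1 := by
  intro h
  obtain ⟨i, hi⟩ := Finset.card_eq_one.mp h
  have hmem : ∀ j, x ∈ (σ j).support ↔ j = i := by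
    intro j
    constructor
    · intro hj
      have : j ∈ Finset.univ.filter fun i => x ∈ (σ i).support :=
        Finset.mem_filter.mpr ⟨Finset.mem_univ _, hj⟩
      rw [hi] at this; simpa using this
    · intro hj; subst hj
      have : j ∈ Finset.univ.filter fun i => x ∈ (σ i).support := by
        rw [hi]; exact Finset.mem_singleton_self j
      exact (Finset.mem_filter.mp this).2
  have hfix : ∀ j, j ≠ i → σ j x = x := fun j hj =>
    Equiv.Perm.notMem_support.mp (fun hm => hj ((hmem j).mp hm))
  have hmov : σ i x ≠ x := Equiv.Perm.mem_support.mp ((hmem i).mpr rfl)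
  have hp : σ 0 * (σ 1 * (σ 2 * σ 3)) = 1 := by simpa [List.ofFn_succ, mul_assoc] using hprod
  have hx : σ 0 (σ 1 (σ 2 (σ 3 x))) = x := by
    have := Equiv.ext_iff.mp hp x
    simpa [Equiv.Perm.mul_apply] using this
  fin_cases i
  · rw [hfix 3 (by decide), hfix 2 (by decide), hfix 1 (by decide)] at hx
    exact hmov hx
  · rw [hfix 3 (by decide), hfix 2 (by decide)] at hx
    exact hmov ((σ 0).injective (hx.trans (hfix 0 (by decide)).symm))
  · rw [hfix 3 (by decide)] at hx
    have h1 : σ 1 (σ 2 x) = x := (σ 0).injective (hx.trans (hfix 0 (by decide)).symm)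
    exact hmov ((σ 1).injective (h1.trans (hfix 1 (by decide)).symm))
  · have h0 : σ 1 (σ 2 (σ 3 x)) = x := (σ 0).injective (hx.trans (hfix 0 (by decide)).symm)
    have h1 : σ 2 (σ 3 x) = x := (σ 1).injective (h0.trans (hfix 1 (by decide)).symm)
    exact hmov ((σ 2).injective (h1.trans (hfix 2 (by decide)).symm))

/-- Double counting: the sum of the `repCount`s equals the sum of the support sizes. -/
lemma sum_repCount {d : ℕ} (σ : Fin 4 → Equiv.Perm (Fin d)) :
    ∑ x : Fin d, repCount σ x = ∑ i : Fin 4, (σ i).support.card := by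
  calc ∑ x : Fin d, repCount σ x
      = ∑ x : Fin d, ∑ i : Fin 4, (if x ∈ (σ i).support then 1 else 0) := by
        simp [repCount, Finset.card_filter]
    _ = ∑ i : Fin 4, ∑ x : Fin d, (if x ∈ (σ i).support then 1 else 0) := Finset.sum_comm
    _ = ∑ i : Fin 4, (σ i).support.card := by
        refine Finset.sum_congr rfl fun i _ => ?_
        rw [Finset.sum_ite_mem, Finset.univ_inter, Finset.sum_const, smul_eq_mul, mul_one]

/-- If some point lies in at least three supports and every point lies in at least
    two supports, the cycles generate a transitive group. -/
lemma transitive_of_special {d : ℕ} (σ : Fin 4 → Equiv.Perm (Fin d))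
    (hcyc : ∀ i, (σ i).IsCycle) (k : Fin d) (hk : 3 ≤ repCount σ k)
    (hall : ∀ x, 2 ≤ repCount σ x) :
    ∀ x y : Fin d, ∃ g ∈ Subgroup.closure (Set.range σ), g x = y := by
  have key : ∀ x : Fin d, ∃ g ∈ Subgroup.closure (Set.range σ), g x = k := by
    intro x
    obtain ⟨i, hi⟩ : ∃ i, x ∈ (σ i).support := by
      have h2 := hall x
      have hpos : 0 < (Finset.univ.filter fun i => x ∈ (σ i).support).card := by
        unfold repCount at h2; omega
      obtain ⟨i, hi⟩ := Finset.card_pos.mp hpos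
      exact ⟨i, (Finset.mem_filter.mp hi).2⟩
    obtain ⟨j, hxj, hkj⟩ : ∃ j, x ∈ (σ j).support ∧ k ∈ (σ j).support := by
      by_cases hki : k ∈ (σ i).support
      · exact ⟨i, hi, hki⟩
      · have hsub : (Finset.univ.filter fun i' => k ∈ (σ i').support) ⊆ Finset.univ.erase i := by
          intro a ha
          refine Finset.mem_erase.mpr ⟨?_, Finset.mem_univ _⟩
          rintro rfl
          exact hki (Finset.mem_filter.mp ha).2
        have hcard : (Finset.univ.erase i).card ≤
            (Finset.univ.filter fun i' => k ∈ (σ i').support).card := by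
          have h3 : (Finset.univ.erase i).card = 3 := by
            rw [Finset.card_erase_of_mem (Finset.mem_univ i)]; simp
          rw [h3]; exact hk
        have heq := Finset.eq_of_subset_of_card_le hsub hcard
        obtain ⟨i', hi'mem, hne⟩ :=
          Finset.exists_mem_ne
            (s := Finset.univ.filter fun i' => x ∈ (σ i').support)
            (by have := hall x; unfold repCount at this; omega) i
        have hki' : i' ∈ Finset.univ.filter fun i' => k ∈ (σ i').support := by
          rw [heq]; exact Finset.mem_erase.mpr ⟨hne, Finset.mem_univ _⟩
        exact ⟨i', (Finset.mem_filter.mp hi'mem).2, (Finset.mem_filter.mp hki').2⟩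
    obtain ⟨n, hn⟩ := (hcyc j).exists_pow_eq (Equiv.Perm.mem_support.mp hxj)
      (Equiv.Perm.mem_support.mp hkj)
    exact ⟨(σ j) ^ n, pow_mem (Subgroup.subset_closure (Set.mem_range_self j)) n, hn⟩
  intro x y
  obtain ⟨g, hg, hgx⟩ := key x
  obtain ⟨h, hh, hhy⟩ := key y
  refine ⟨h⁻¹ * g, mul_mem (inv_mem hh) hg, ?_⟩
  have : h⁻¹ (h y) = y := (h : Equiv.Perm (Fin d)).symm_apply_apply y
  simp only [Equiv.Perm.mul_apply, hgx, ← hhy]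
  simpa using this

/-- Distribution of a total of 2 among values bounded by 2. -/
lemma sum_eq_two_cases {d : ℕ} (f : Fin d → ℕ) (hle : ∀ x, f x ≤ 2)
    (hsum : ∑ x : Fin d, f x = 2) :
    (∃ k, f k = 2 ∧ ∀ x, x ≠ k → f x = 0) ∨
      (∃ k l, k ≠ l ∧ f k = 1 ∧ f l = 1 ∧ ∀ x, x ≠ k → x ≠ l → f x = 0) := by
  by_cases hk : ∃ k, f k = 2
  · obtain ⟨k, hk2⟩ := hk
    left
    refine ⟨k, hk2, fun x hx => ?_⟩
    have herase : ∑ y ∈ Finset.univ.erase k, f y = 0 := by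
      have := Finset.add_sum_erase Finset.univ f (Finset.mem_univ k)
      omega
    exact Finset.sum_eq_zero_iff.mp herase x (Finset.mem_erase.mpr ⟨hx, Finset.mem_univ _⟩)
  · right
    push_neg at hk
    have hle1 : ∀ x, f x ≤ 1 := fun x => by have := hle x; have := hk x; omega
    have hite : ∀ x, f x = if f x = 1 then 1 else 0 := by
      intro x; have := hle1 x; split <;> omega
    have hcard : (Finset.univ.filter fun x => f x = 1).card = 2 := by
      rw [Finset.card_filter, ← hsum]
      exact (Finset.sum_congr rfl fun x _ => (hite x).symm)
    obtain ⟨k, l, hkl, hS⟩ := Finset.card_eq_two.mp hcard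
    have hmem : ∀ x, f x = 1 ↔ (x = k ∨ x = l) := by
      intro x
      constructor
      · intro hx
        have : x ∈ ({k, l} : Finset (Fin d)) := by
          rw [← hS]; exact Finset.mem_filter.mpr ⟨Finset.mem_univ _, hx⟩
        simpa using this
      · intro hx
        have : x ∈ Finset.univ.filter fun x => f x = 1 := by
          rw [hS]; simpa using hx
        exact (Finset.mem_filter.mp this).2
    refine ⟨k, l, hkl, (hmem k).mpr (Or.inl rfl), (hmem l).mpr (Or.inr rfl), fun x hxk hxl => ?_⟩
    have h1 : f x ≠ 1 := fun h => by rcases (hmem x).mp h with h | h <;> [exact hxk h; exact hxl h]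
    have := hle1 x; omega

/-- In Situation (*), for four cycles of lengths `e₁ ≤ e₂ ≤ e₃ ≤ e₄` with trivial
product, transitivity is equivalent to every point being in some support, which is
equivalent to: every point is in the support of exactly two of the cycles, except that
either one point is in the support of all four, or two distinct points are each in the
support of exactly three. -/
theorem transitivity_support_characterization
    (d e1 e2 e3 e4 : ℕ) (hd : 0 < d)
    (h1 : 2 ≤ e1) (h12 : e1 ≤ e2) (h23 : e2 ≤ e3) (h34 : e3 ≤ e4) (h4d : e4 ≤ d)
    (hsum : 2 * d - 2 = (e1 - 1) + (e2 - 1) + (e3 - 1) + (e4 - 1))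
    (σ : Fin 4 → Equiv.Perm (Fin d))
    (hcyc : ∀ i, (σ i).IsCycle ∧ (σ i).support.card = ![e1, e2, e3, e4] i)
    (hprod : (List.ofFn σ).prod = 1) :
    ((∀ x y : Fin d, ∃ g ∈ Subgroup.closure (Set.range σ), g x = y) ↔
      (∀ x : Fin d, ∃ i, x ∈ (σ i).support)) ∧
    ((∀ x : Fin d, ∃ i, x ∈ (σ i).support) ↔
      ((∃ k : Fin d, repCount σ k = 4 ∧ ∀ x, x ≠ k → repCount σ x = 2) ∨
        (∃ k l : Fin d, k ≠ l ∧ repCount σ k = 3 ∧ repCount σ l = 3 ∧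
          ∀ x, x ≠ k → x ≠ l → repCount σ x = 2))) := by
  have hd2 : 2 ≤ d := le_trans h1 (le_trans h12 (le_trans h23 (le_trans h34 h4d)))
  have hne1 := repCount_ne_one σ hprod
  have hle4 : ∀ x, repCount σ x ≤ 4 := by
    intro x
    calc repCount σ x ≤ (Finset.univ : Finset (Fin 4)).card := Finset.card_filter_le _ _
      _ = 4 := by simp
  have hsumrc : ∑ x : Fin d, repCount σ x = 2 * d + 2 := by
    rw [sum_repCount]
    have : ∑ i : Fin 4, (σ i).support.card = e1 + e2 + e3 + e4 := by
      rw [Fin.sum_univ_four, (hcyc 0).2, (hcyc 1).2, (hcyc 2).2, (hcyc 3).2]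
      simp
    rw [this]; omega
  -- (b) ↔ (c)
  have hbc : (∀ x : Fin d, ∃ i, x ∈ (σ i).support) ↔
      ((∃ k : Fin d, repCount σ k = 4 ∧ ∀ x, x ≠ k → repCount σ x = 2) ∨
        (∃ k l : Fin d, k ≠ l ∧ repCount σ k = 3 ∧ repCount σ l = 3 ∧
          ∀ x, x ≠ k → x ≠ l → repCount σ x = 2)) := by
    constructor
    · intro hb
      have h2 : ∀ x, 2 ≤ repCount σ x := by
        intro x
        obtain ⟨i, hi⟩ := hb x
        have hpos : 0 < repCount σ x :=
          Finset.card_pos.mpr ⟨i, Finset.mem_filter.mpr ⟨Finset.mem_univ _, hi⟩⟩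
        have := hne1 x; omega
      set f : Fin d → ℕ := fun x => repCount σ x - 2 with hf
      have hsumf : ∑ x : Fin d, f x = 2 := by
        have heq : ∑ x : Fin d, (f x + 2) = ∑ x : Fin d, repCount σ x :=
          Finset.sum_congr rfl fun x _ => by have := h2 x; simp only [hf]; omega
        rw [Finset.sum_add_distrib, Finset.sum_const, Finset.card_univ] at heq
        simp only [Fintype.card_fin, smul_eq_mul, mul_one] at heq
        omega
      rcases sum_eq_two_cases f (fun x => by have := hle4 x; simp only [hf]; omega) hsumf with
        ⟨k, hk2, h0⟩ | ⟨k, l, hkl, hk1, hl1, h0⟩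
      · left
        refine ⟨k, ?_, fun x hx => ?_⟩
        · have := h2 k; simp only [hf] at hk2; omega
        · have := h2 x; have := h0 x hx; simp only [hf] at this; omega
      · right
        refine ⟨k, l, hkl, ?_, ?_, fun x hxk hxl => ?_⟩
        · have := h2 k; simp only [hf] at hk1; omega
        · have := h2 l; simp only [hf] at hl1; omega
        · have := h2 x; have := h0 x hxk hxl; simp only [hf] at this; omega
    · intro hc x
      have hpos : 0 < repCount σ x := by
        rcases hc with ⟨k, hk4, ho⟩ | ⟨k, l, hkl, hk3, hl3, ho⟩
        · rcases eq_or_ne x k with rfl | hx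
          · omega
          · have := ho x hx; omega
        · rcases eq_or_ne x k with rfl | hxk
          · omega
          · rcases eq_or_ne x l with rfl | hxl
            · omega
            · have := ho x hxk hxl; omega
      obtain ⟨i, hi⟩ := Finset.card_pos.mp hpos
      exact ⟨i, (Finset.mem_filter.mp hi).2⟩
  refine ⟨⟨?_, ?_⟩, hbc⟩
  · -- (a) → (b)
    intro ha x
    by_contra hcon
    push_neg at hcon
    have hstab : Subgroup.closure (Set.range σ) ≤ MulAction.stabilizer (Equiv.Perm (Fin d)) x := by
      rw [Subgroup.closure_le]
      rintro g ⟨i, rfl⟩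
      have : σ i x = x := Equiv.Perm.notMem_support.mp (hcon i)
      simpa [MulAction.mem_stabilizer_iff, Equiv.Perm.smul_def] using this
    obtain ⟨y, hy⟩ := Fintype.exists_ne_of_one_lt_card (by simp only [Fintype.card_fin]; omega) x
    obtain ⟨g, hg, hgx⟩ := ha x y
    have : g x = x := by
      have := hstab hg
      simpa [MulAction.mem_stabilizer_iff, Equiv.Perm.smul_def] using this
    exact hy (by rw [← hgx, this])
  · -- (b) → (a): via (c), there is a point in ≥ 3 supports and all points in ≥ 2 supports
    intro hb
    have h2 : ∀ x, 2 ≤ repCount σ x := by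
      rcases hbc.mp hb with ⟨k, hk4, ho⟩ | ⟨k, l, hkl, hk3, hl3, ho⟩ <;> intro x
      · rcases eq_or_ne x k with rfl | hx
        · omega
        · have := ho x hx; omega
      · rcases eq_or_ne x k with rfl | hxk
        · omega
        · rcases eq_or_ne x l with rfl | hxl
          · omega
          · have := ho x hxk hxl; omega
    obtain ⟨k, hk3⟩ : ∃ k, 3 ≤ repCount σ k := by
      rcases hbc.mp hb with ⟨k, hk4, _⟩ | ⟨k, _, _, hk3, _, _⟩
      · exact ⟨k, by omega⟩
      · exact ⟨k, by omega⟩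
    exact transitive_of_special σ (fun i => (hcyc i).1) k hk3 h2
end

section
/- Suppose σ_1, σ_2 ∈ S_d are single cycles whose supports are not disjoint, and let σ be any cycle occurring in the decomposition of σ_1 σ_2 into disjoint cycles. Then there exists an element of {1, …, d} lying in the support of σ, in the support of σ_1, and in the support of σ_2. -/
/-!
Pick `x` in the support of `σ`; it lies in the support of `σ₁` or of `σ₂`, say of `σ₁`.
If no point of `supp σ ∩ supp σ₁` were moved by `σ₂`, then `σ₁σ₂` would agree with `σ₁` on
this set, which is therefore `σ₁`-invariant (the support of a cycle factor is invariant under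
the product). Since `σ₁` is a cycle, the set would contain all of `supp σ₁`, in particular a
common point of `supp σ₁` and `supp σ₂`. The case of `σ₂` is the same argument for `σ₂⁻¹`
and `(σ₁σ₂)⁻¹ = σ₂⁻¹σ₁⁻¹`.
-/

open Equiv.Perm Set

namespace Equiv.Perm

variable {α : Type*} [Fintype α] [DecidableEq α]

theorem IsCycle.support_subset_of_mapsTo {c : Perm α}
    (hc : c.IsCycle) {s : Set α} (hs : MapsTo c s s) {x : α} (hxs : x ∈ s)
    (hxc : x ∈ c.support) : (c.support : Set α) ⊆ s := by
  intro y hyc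
  obtain ⟨k, rfl⟩ := hc.exists_pow_eq (mem_support.mp hxc) (mem_support.mp hyc)
  exact hs.perm_pow k hxs

theorem exists_mem_support_inter_of_mem_cycleFactorsFinset {f σ c : Perm α}
    (hσ : σ ∈ f.cycleFactorsFinset) (hc : c.IsCycle) (n : ℤ) (t : Finset α)
    (hagree : ∀ y ∈ σ.support, y ∈ c.support → y ∉ t → (f ^ n) y = c y)
    {x a : α} (hxσ : x ∈ σ.support) (hxc : x ∈ c.support) (hac : a ∈ c.support) (hat : a ∈ t) :
    ∃ y ∈ σ.support, y ∈ c.support ∧ y ∈ t := by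
  by_contra! hnone
  let s : Set α := {y | y ∈ σ.support ∧ y ∈ c.support}
  have hs : MapsTo c s s := fun y ⟨hyσ, hyc⟩ => by
    refine ⟨?_, apply_mem_support.mpr hyc⟩
    rw [← hagree y hyσ hyc (hnone y hyσ hyc)]
    exact zpow_apply_mem_support_of_mem_cycleFactorsFinset_iff (c := ⟨σ, hσ⟩) |>.mpr hyσ
  exact hnone a (hc.support_subset_of_mapsTo hs ⟨hxσ, hxc⟩ hxc hac).1 hac hat

end Equiv.Perm

/-- If `σ₁, σ₂ ∈ S_d` are non-disjoint cycles and `σ` is any cycle in the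
decomposition of `σ₁ σ₂` into disjoint cycles, then some element of `{1, …, d}` lies
in the support of `σ`, of `σ₁`, and of `σ₂`. -/
theorem exists_common_support_of_cycle_factor
    (d : ℕ) (σ1 σ2 : Equiv.Perm (Fin d))
    (h1 : σ1.IsCycle) (h2 : σ2.IsCycle)
    (hnd : ¬Disjoint σ1.support σ2.support)
    (σ : Equiv.Perm (Fin d)) (hσ : σ ∈ (σ1 * σ2).cycleFactorsFinset) :
    ∃ x : Fin d, x ∈ σ.support ∧ x ∈ σ1.support ∧ x ∈ σ2.support := by
  obtain ⟨a, ha1, ha2⟩ := Finset.not_disjoint_iff.mp hnd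
  obtain ⟨x, hxσ⟩ := (mem_cycleFactorsFinset_iff.mp hσ).1.nonempty_support
  rcases Finset.mem_union.mp (support_mul_le σ1 σ2 (mem_cycleFactorsFinset_support_le hσ hxσ))
    with hx1 | hx2
  · have hagree : ∀ y ∈ σ.support, y ∈ σ1.support → y ∉ σ2.support →
        ((σ1 * σ2) ^ (1 : ℤ)) y = σ1 y := fun y _ _ hy2 => by
      rw [zpow_one, mul_apply, notMem_support.mp hy2]
    exact exists_mem_support_inter_of_mem_cycleFactorsFinset hσ h1 1 σ2.support hagree
      hxσ hx1 ha1 ha2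
  · have hagree : ∀ y ∈ σ.support, y ∈ σ2⁻¹.support → y ∉ σ1.support →
        ((σ1 * σ2) ^ (-1 : ℤ)) y = σ2⁻¹ y := fun y _ _ hy1 => by
      rw [zpow_neg_one, mul_inv_rev, mul_apply, inv_eq_iff_eq.mpr (notMem_support.mp hy1).symm]
    obtain ⟨y, hyσ, hy2, hy1⟩ := exists_mem_support_inter_of_mem_cycleFactorsFinset hσ h2.inv
      (-1) σ1.support hagree hxσ (support_inv σ2 ▸ hx2) (support_inv σ2 ▸ ha2) ha1
    exact ⟨y, hyσ, hy1, support_inv σ2 ▸ hy2⟩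
end

section
/- Let σ, σ' ∈ S_d be single cycles whose supports are not disjoint, and let S be the intersection of the supports of σ, σ' and σσ'. If S has at most 2 elements, then the number of cycles in the decomposition of σσ' into disjoint cycles is exactly the cardinality of S (in particular at most 2), and the support of each of these disjoint cycles contains exactly one element of S. -/
/-!
Every cycle of `σσ'` meets `S`: a cycle avoiding `supp σ ∩ supp σ'` would be invariant under
`σ` or under `σ'`, hence would contain the whole support of that cycle, which meets
`supp σ ∩ supp σ'`. The cycle supports are disjoint and cover `S`, so `σσ'` has at most `|S|`
cycles. Comparing signs, `|supp(σσ')| + #cycles(σσ') ≡ |supp σ| + |supp σ'|`, and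
`|supp(σσ')| = |supp σ Δ supp σ'| + |S|`, so `#cycles(σσ') ≡ |S| (mod 2)`. For `|S| ≤ 2` this
forces `#cycles(σσ') = |S|`, and then each cycle contains exactly one point of `S`.
-/

open Equiv Finset

namespace Equiv.Perm

variable {α : Type*} [DecidableEq α] [Fintype α]

theorem IsCycle.support_subset_of_mapsTo_s10 {f : Perm α} (hf : f.IsCycle) {s : Finset α}
    (hs : ∀ y ∈ s, f y ∈ s) {x : α} (hxs : x ∈ s) (hx : x ∈ f.support) : f.support ⊆ s := by
  have hpow : ∀ n : ℕ, (f ^ n) x ∈ s := fun n => by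
    induction n with
    | zero => simpa using hxs
    | succ n ih => simpa [pow_succ'] using hs _ ih
  intro y hy
  obtain ⟨n, rfl⟩ := hf.exists_pow_eq (mem_support.mp hx) (mem_support.mp hy)
  exact hpow n

theorem sum_card_support_inter_cycleFactorsFinset {f : Perm α} {s : Finset α}
    (hs : s ⊆ f.support) : ∑ c ∈ f.cycleFactorsFinset, #(c.support ∩ s) = #s := by
  rw [card_eq_sum_card_fiberwise (f := f.cycleOf) (t := f.cycleFactorsFinset)
    fun x hx => cycleOf_mem_cycleFactorsFinset_iff.mpr (hs hx)]
  refine sum_congr rfl fun c hc => congrArg card (Finset.ext fun x => ?_)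
  simp only [mem_inter, mem_filter]
  constructor
  · rintro ⟨hxc, hxs⟩
    exact ⟨hxs, (cycle_is_cycleOf hxc hc).symm⟩
  · rintro ⟨hxs, rfl⟩
    exact ⟨mem_support_cycleOf_iff.mpr ⟨SameCycle.refl _ _, hs hxs⟩, hxs⟩

theorem support_mul_sdiff_inter (σ σ' : Perm α) :
    (σ * σ').support \ (σ.support ∩ σ'.support) =
      (σ.support ∪ σ'.support) \ (σ.support ∩ σ'.support) := by
  ext x
  simp only [mem_sdiff, mem_union, mem_inter, mem_support, mul_apply, ne_eq]
  by_cases hx : σ x = x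
  · by_cases hx' : σ' x = x <;> simp [hx, hx', σ.injective.eq_iff' hx]
  · by_cases hx' : σ' x = x <;> simp [hx, hx']

theorem card_support_mul_add_two_mul_card_inter (σ σ' : Perm α) :
    #(σ * σ').support + 2 * #(σ.support ∩ σ'.support) =
      #σ.support + #σ'.support + #(σ.support ∩ σ'.support ∩ (σ * σ').support) := by
  have hsplit := card_inter_add_card_sdiff (σ * σ').support (σ.support ∩ σ'.support)
  have hsymm := card_sdiff_add_card_eq_card (inter_subset_union (s := σ.support) (t := σ'.support))
  have hunion := card_union_add_card_inter σ.support σ'.support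
  rw [support_mul_sdiff_inter, inter_comm] at hsplit
  omega

theorem card_cycleFactorsFinset_eq_card_cycleType (f : Perm α) :
    #f.cycleFactorsFinset = Multiset.card f.cycleType := by
  rw [cycleType_def, Multiset.card_map]
  rfl

theorem IsCycle.card_cycleFactorsFinset_mul_modEq {σ σ' : Perm α} (h : σ.IsCycle)
    (h' : σ'.IsCycle) :
    #(σ * σ').cycleFactorsFinset ≡ #(σ.support ∩ σ'.support ∩ (σ * σ').support) [MOD 2] := by
  have hsign : Perm.sign (σ * σ') = Perm.sign σ * Perm.sign σ' := map_mul _ _ _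
  rw [sign_of_cycleType, sum_cycleType, ← card_cycleFactorsFinset_eq_card_cycleType, h.sign,
    h'.sign, neg_mul_neg, ← pow_add, pow_eq_pow_iff_modEq,
    orderOf_eq_prime (Int.units_sq _) (by decide)] at hsign
  have hcard := card_support_mul_add_two_mul_card_inter σ σ'
  unfold Nat.ModEq at hsign ⊢
  omega

theorem IsCycle.support_inter_nonempty_of_mem_cycleFactorsFinset_mul {σ σ' c : Perm α}
    (h : σ.IsCycle) (h' : σ'.IsCycle) (hnd : ¬_root_.Disjoint σ.support σ'.support)
    (hc : c ∈ (σ * σ').cycleFactorsFinset) :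
    (c.support ∩ (σ.support ∩ σ'.support ∩ (σ * σ').support)).Nonempty := by
  obtain ⟨w, hwσ, hwσ'⟩ := not_disjoint_iff.mp hnd
  obtain ⟨hcycle, hc_apply⟩ := mem_cycleFactorsFinset_iff.mp hc
  have hsub := mem_cycleFactorsFinset_support_le hc
  by_contra hempty
  have havoid : ∀ y ∈ c.support, y ∈ σ.support → y ∉ σ'.support := fun y hy hyσ hyσ' =>
    hempty ⟨y, mem_inter.mpr ⟨hy, mem_inter.mpr ⟨mem_inter.mpr ⟨hyσ, hyσ'⟩, hsub hy⟩⟩⟩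
  by_cases hA : ∃ x ∈ c.support, x ∈ σ.support
  · obtain ⟨x, hxc, hxσ⟩ := hA
    have hclosed : ∀ y ∈ c.support ∩ σ.support, σ y ∈ c.support ∩ σ.support := by
      intro y hy
      rw [mem_inter] at hy ⊢
      have hcy : c y = σ y := by
        rw [hc_apply y hy.1, mul_apply, notMem_support.mp (havoid y hy.1 hy.2)]
      exact ⟨hcy ▸ apply_mem_support.mpr hy.1, apply_mem_support.mpr hy.2⟩
    have hw := h.support_subset_of_mapsTo_s10 hclosed (mem_inter.mpr ⟨hxc, hxσ⟩) hxσ hwσ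
    exact havoid w (mem_inter.mp hw).1 hwσ hwσ'
  · push Not at hA
    obtain ⟨x, hxc⟩ := hcycle.nonempty_support
    have hxσ' : x ∈ σ'.support := by
      by_contra hx
      exact mem_support.mp (hsub hxc)
        (by rw [mul_apply, notMem_support.mp hx, notMem_support.mp (hA x hxc)])
    have hclosed : ∀ y ∈ c.support, σ' y ∈ c.support := by
      intro y hy
      have hcy := apply_mem_support.mpr hy
      have hcy_apply : c y = σ (σ' y) := hc_apply y hy
      have hσ'y : σ' y ∉ σ.support := fun hσy =>
        hA _ hcy (hcy_apply ▸ apply_mem_support.mpr hσy)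
      rwa [hcy_apply, notMem_support.mp hσ'y] at hcy
    exact hA w (h'.support_subset_of_mapsTo_s10 hclosed hxc hxσ' hwσ') hwσ

end Equiv.Perm

open Equiv.Perm in
/-- Let `σ, σ'` be non-disjoint cycles in `S_d` and let `S` be the intersection of the
supports of `σ`, `σ'` and `σσ'`. If `S` has at most two elements, then the number of
disjoint cycles in the cycle decomposition of `σσ'` equals the cardinality of `S`, and
the support of each of these cycles contains exactly one element of `S`. -/
theorem cycle_count_eq_triple_support_card
    (d : ℕ) (σ σ' : Equiv.Perm (Fin d))
    (h : σ.IsCycle) (h' : σ'.IsCycle)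
    (hnd : ¬Disjoint σ.support σ'.support)
    (hS : (σ.support ∩ σ'.support ∩ (σ * σ').support).card ≤ 2) :
    (σ * σ').cycleFactorsFinset.card =
      (σ.support ∩ σ'.support ∩ (σ * σ').support).card ∧
    ∀ c ∈ (σ * σ').cycleFactorsFinset,
      (c.support ∩ (σ.support ∩ σ'.support ∩ (σ * σ').support)).card = 1 := by
  have hpar : _ % 2 = _ % 2 := h.card_cycleFactorsFinset_mul_modEq h'
  set S := σ.support ∩ σ'.support ∩ (σ * σ').support
  have hsum : ∑ c ∈ (σ * σ').cycleFactorsFinset, #(c.support ∩ S) = #S :=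
    sum_card_support_inter_cycleFactorsFinset inter_subset_right
  have hpos : ∀ c ∈ (σ * σ').cycleFactorsFinset, 1 ≤ #(c.support ∩ S) := fun c hc =>
    card_pos.mpr (h.support_inter_nonempty_of_mem_cycleFactorsFinset_mul h' hnd hc)
  have hle : #(σ * σ').cycleFactorsFinset ≤ #S := by
    simpa [hsum] using card_nsmul_le_sum _ _ 1 hpos
  have hzero : #(σ * σ').cycleFactorsFinset = 0 → #S = 0 := fun h0 => by
    rwa [card_eq_zero.mp h0, sum_empty, eq_comm] at hsum
  have hcard : #(σ * σ').cycleFactorsFinset = #S := by omega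
  refine ⟨hcard, fun c hc => ((sum_eq_sum_iff_of_le hpos).mp ?_ c hc).symm⟩
  rw [hsum, sum_const, smul_eq_mul, mul_one, hcard]
end

section
/- Assume Situation (*). For all admissible parameters (k, m) of family II (i.e., 1 ≤ k ≤ e_3+e_4−d−1, e_4−e_1+1 ≤ m ≤ d+1−e_1 and m ≤ e_4), the tuple F_II(k, m) = (σ_1, σ_2, σ_3, σ_4) is a Hurwitz factorization for (d, 4, 0, (e_1, e_2, e_3, e_4)); moreover σ_3 σ_4 is a product of two disjoint nontrivial cycles. -/
/-- Two tuples are equivalent if they are related by simultaneous conjugation. -/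
def HEquiv {d r : ℕ} (σ σ' : Fin r → Equiv.Perm (Fin d)) : Prop :=
  ∃ τ : Equiv.Perm (Fin d), ∀ i, σ' i = τ * σ i * τ⁻¹

/-- The ascending run `a, a+1, …, b` (empty when `b = a - 1`). -/
def ascList (a b : ℕ) : List ℕ := List.range' a (b + 1 - a)

/-- The descending run `b, b-1, …, a` (empty when `b = a - 1`). -/
def descList (b a : ℕ) : List ℕ := (List.range' a (b + 1 - a)).reverse

/-- The element of `Fin d` corresponding to `n ∈ {1, …, d}`. -/
def toFin (d : ℕ) (hd : 0 < d) (n : ℕ) : Fin d := ⟨(n - 1) % d, Nat.mod_lt _ hd⟩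

/-- The auxiliary cycle `σ = (k, k+1, …, e₃+e₄-k)` of family I. -/
def sigmaAux (d : ℕ) (hd : 0 < d) (e3 e4 k : ℕ) : Equiv.Perm (Fin d) :=
  ((ascList k (e3 + e4 - k)).map (toFin d hd)).formPerm

/-- The tuple `F_I(k, ℓ)` of family I:
`σ₁ = (d, d-1, …, e₃+e₄+1-k, σ^{-(d+2-k-e₁)}(ℓ), …, σ^{-(e₃+e₄+1-2k)}(ℓ) = ℓ)`,
`σ₂ = (e₃+e₄+1-k, …, d-1, d, ℓ, σ⁻¹(ℓ), …, σ^{-(d+1-k-e₁)}(ℓ))`,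
`σ₃ = (k, k-1, …, 2, 1, e₄+1, e₄+2, …, e₃+e₄-k)`, `σ₄ = (1, 2, …, e₄)`,
where `σ = (k, k+1, …, e₃+e₄-k)`. -/
def FI (d : ℕ) (hd : 0 < d) (e1 e3 e4 k l : ℕ) : Fin 4 → Equiv.Perm (Fin d) :=
  let σ := sigmaAux d hd e3 e4 k
  let lf : Fin d := toFin d hd l
  ![ ((descList d (e3 + e4 + 1 - k)).map (toFin d hd) ++
      (List.range' (d + 2 - k - e1) (e1 + e3 + e4 - k - d)).map
        (fun j => (σ ^ j)⁻¹ lf)).formPerm,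
     ((ascList (e3 + e4 + 1 - k) d).map (toFin d hd) ++
      (List.range' 0 (d + 2 - k - e1)).map (fun j => (σ ^ j)⁻¹ lf)).formPerm,
     ((descList k 1 ++ ascList (e4 + 1) (e3 + e4 - k)).map (toFin d hd)).formPerm,
     ((ascList 1 e4).map (toFin d hd)).formPerm ]

/-- The admissible parameter range for family I:
`e₃+e₄-d ≤ k ≤ e₃`, `k ≤ d+1-e₂` and `k ≤ ℓ ≤ e₃+e₄-k`. -/
def AdmI (d e2 e3 e4 k l : ℕ) : Prop :=
  e3 + e4 - d ≤ k ∧ k ≤ e3 ∧ k ≤ d + 1 - e2 ∧ k ≤ l ∧ l ≤ e3 + e4 - k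

/-- The tuple `F_II(k, m)` of family II:
`σ₁ = (m+e₁-1, m+e₁-2, …, m+1, m)`,
`σ₂ = (d, d-1, …, m+e₁, m+d+k-e₃-e₄, m+d-1+k-e₃-e₄, …, k)`,
`σ₃ = (k, k-1, …, 1, e₄+1, e₄+2, …, m+e₁-1, m, m-1, …, m+d+1+k-e₃-e₄, m+e₁, m+e₁+1, …, d)`,
`σ₄ = (1, 2, …, e₄)`. -/
def FII (d : ℕ) (hd : 0 < d) (e1 e3 e4 k m : ℕ) : Fin 4 → Equiv.Perm (Fin d) :=
  ![ ((descList (m + e1 - 1) m).map (toFin d hd)).formPerm,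
     ((descList d (m + e1) ++ descList (m + d + k - e3 - e4) k).map (toFin d hd)).formPerm,
     ((descList k 1 ++ ascList (e4 + 1) (m + e1 - 1) ++
       descList m (m + d + 1 + k - e3 - e4) ++
       ascList (m + e1) d).map (toFin d hd)).formPerm,
     ((ascList 1 e4).map (toFin d hd)).formPerm ]

/-- The admissible parameter range for family II:
`1 ≤ k ≤ e₃+e₄-d-1`, `e₄-e₁+1 ≤ m ≤ d+1-e₁` and `m ≤ e₄`. -/
def AdmII (d e1 e3 e4 k m : ℕ) : Prop :=
  1 ≤ k ∧ k ≤ e3 + e4 - d - 1 ∧ e4 - e1 + 1 ≤ m ∧ m ≤ d + 1 - e1 ∧ m ≤ e4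

namespace FPf
variable {d : ℕ} (hd : 0 < d)

theorem toFin_val (n : ℕ) (h : n ≤ d) (h1 : 1 ≤ n) : (toFin d hd n).val = n - 1 :=
  Nat.mod_eq_of_lt (by omega)

theorem toFin_inj {n n' : ℕ} (h1 : 1 ≤ n) (h2 : n ≤ d) (h1' : 1 ≤ n') (h2' : n' ≤ d)
    (h : toFin d hd n = toFin d hd n') : n = n' := by
  have := congrArg Fin.val h
  rw [toFin_val hd n h2 h1, toFin_val hd n' h2' h1'] at this
  omega

theorem length_ascList (a b : ℕ) : (ascList a b).length = b + 1 - a := by simp [ascList]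
theorem length_descList (b a : ℕ) : (descList b a).length = b + 1 - a := by simp [descList]
theorem mem_ascList {n a b : ℕ} : n ∈ ascList a b ↔ a ≤ n ∧ n ≤ b := by
  simp [ascList, List.mem_range'_1]; omega
theorem mem_descList {n a b : ℕ} : n ∈ descList b a ↔ a ≤ n ∧ n ≤ b := by
  simp [descList, List.mem_range'_1]; omega
theorem nodup_ascList (a b : ℕ) : (ascList a b).Nodup := by simp [ascList, List.nodup_range']
theorem nodup_descList (b a : ℕ) : (descList b a).Nodup := by simp [descList, List.nodup_range']

theorem ascList_elem (a b i : ℕ) (h : i < b + 1 - a) : (ascList a b)[i]? = some (a + i) := by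
  rw [List.getElem?_eq_getElem (by simp [length_ascList]; omega)]
  simp [ascList, List.getElem_range']

theorem descList_elem (b a i : ℕ) (h : i < b + 1 - a) : (descList b a)[i]? = some (b - i) := by
  rw [List.getElem?_eq_getElem (by simp [length_descList]; omega)]
  simp only [descList, List.getElem_reverse, List.getElem_range', List.length_range',
    Option.some.injEq]
  omega


section eval
variable (L : List ℕ)

theorem nodup_map (hb : ∀ x ∈ L, 1 ≤ x ∧ x ≤ d) (hnd : L.Nodup) : (L.map (toFin d hd)).Nodup := by
  refine List.Nodup.map_on ?_ hnd
  intro x hx y hy hxy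
  exact toFin_inj hd (hb x hx).1 (hb x hx).2 (hb y hy).1 (hb y hy).2 hxy

theorem formPerm_fix (hb : ∀ x ∈ L, 1 ≤ x ∧ x ≤ d) (n : ℕ) (h1 : 1 ≤ n) (h2 : n ≤ d) (hn : n ∉ L) :
    (L.map (toFin d hd)).formPerm (toFin d hd n) = toFin d hd n := by
  apply List.formPerm_apply_of_notMem
  intro hmem
  obtain ⟨x, hx, hex⟩ := List.mem_map.mp hmem
  exact hn (by rwa [toFin_inj hd (hb x hx).1 (hb x hx).2 h1 h2 hex] at hx)

theorem formPerm_step_mod (hb : ∀ x ∈ L, 1 ≤ x ∧ x ≤ d) (hnd : L.Nodup) (i n n' : ℕ) (hn : L[i]? = some n)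
    (hn' : L[(i + 1) % L.length]? = some n') :
    (L.map (toFin d hd)).formPerm (toFin d hd n) = toFin d hd n' := by
  obtain ⟨hi, hv⟩ := List.getElem?_eq_some_iff.mp hn
  obtain ⟨hi', hv'⟩ := List.getElem?_eq_some_iff.mp hn'
  have key := List.formPerm_apply_getElem (L.map (toFin d hd)) (nodup_map hd L hb hnd) i
    (by simpa using hi)
  simpa [hv, hv'] using key

theorem formPerm_step (hb : ∀ x ∈ L, 1 ≤ x ∧ x ≤ d) (hnd : L.Nodup) (i n n' : ℕ) (hn : L[i]? = some n) (hn' : L[i + 1]? = some n') :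
    (L.map (toFin d hd)).formPerm (toFin d hd n) = toFin d hd n' := by
  refine formPerm_step_mod hd L hb hnd i n n' hn ?_
  have := (List.getElem?_eq_some_iff.mp hn').1
  rwa [Nat.mod_eq_of_lt this]

theorem formPerm_wrap (hb : ∀ x ∈ L, 1 ≤ x ∧ x ≤ d) (hnd : L.Nodup) (i n n' : ℕ) (hn : L[i]? = some n) (hi : i + 1 = L.length)
    (hn' : L[0]? = some n') :
    (L.map (toFin d hd)).formPerm (toFin d hd n) = toFin d hd n' := by
  refine formPerm_step_mod hd L hb hnd i n n' hn ?_
  rwa [hi, Nat.mod_self]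

end eval

theorem ascList_elem' (a b i : ℕ) :
    (ascList a b)[i]? = if i < b + 1 - a then some (a + i) else none := by
  split_ifs with h
  · exact ascList_elem a b i h
  · exact List.getElem?_eq_none (by rw [length_ascList]; omega)

theorem descList_elem' (b a i : ℕ) :
    (descList b a)[i]? = if i < b + 1 - a then some (b - i) else none := by
  split_ifs with h
  · exact descList_elem b a i h
  · exact List.getElem?_eq_none (by rw [length_descList]; omega)

/-! ### The four lists of family II -/

def LL1 (e1 m : ℕ) : List ℕ := descList (m + e1 - 1) m
def LL2 (d e1 e3 e4 k m : ℕ) : List ℕ :=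
  descList d (m + e1) ++ descList (m + d + k - e3 - e4) k
def LL3 (d e1 e3 e4 k m : ℕ) : List ℕ :=
  descList k 1 ++ ascList (e4 + 1) (m + e1 - 1) ++
    descList m (m + d + 1 + k - e3 - e4) ++ ascList (m + e1) d
def LL4 (e4 : ℕ) : List ℕ := ascList 1 e4

structure Good (d e1 e2 e3 e4 k m : ℕ) : Prop where
  hd : 0 < d
  h1 : 2 ≤ e1
  h12 : e1 ≤ e2
  h23 : e2 ≤ e3
  h34 : e3 ≤ e4
  h4d : e4 ≤ d
  hsum : e1 + e2 + e3 + e4 = 2 * d + 2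
  hk1 : 1 ≤ k
  hk2 : k + d + 1 ≤ e3 + e4
  hm1 : e4 + 1 ≤ m + e1
  hm2 : m + e1 ≤ d + 1
  hm3 : m ≤ e4

variable {d e1 e2 e3 e4 k m : ℕ}

theorem len1 (G : Good d e1 e2 e3 e4 k m) : (LL1 e1 m).length = e1 := by
  obtain ⟨_, h1, _, _, _, _, _, _, _, _, _, _⟩ := G
  simp [LL1, length_descList]; omega

theorem len2 (G : Good d e1 e2 e3 e4 k m) : (LL2 d e1 e3 e4 k m).length = e2 := by
  obtain ⟨_, h1, h12, h23, h34, h4d, hsum, hk1, hk2, hm1, hm2, hm3⟩ := G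
  simp [LL2, length_descList]; omega

theorem len3 (G : Good d e1 e2 e3 e4 k m) : (LL3 d e1 e3 e4 k m).length = e3 := by
  obtain ⟨_, h1, h12, h23, h34, h4d, hsum, hk1, hk2, hm1, hm2, hm3⟩ := G
  simp [LL3, length_descList, length_ascList]; omega

theorem len4 (G : Good d e1 e2 e3 e4 k m) : (LL4 e4).length = e4 := by
  simp [LL4, length_ascList]

theorem mem1 {n : ℕ} (G : Good d e1 e2 e3 e4 k m) :
    n ∈ LL1 e1 m ↔ m ≤ n ∧ n ≤ m + e1 - 1 := by
  simp [LL1, mem_descList]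

theorem mem2 {n : ℕ} (G : Good d e1 e2 e3 e4 k m) :
    n ∈ LL2 d e1 e3 e4 k m ↔ (m + e1 ≤ n ∧ n ≤ d) ∨ (k ≤ n ∧ n ≤ m + d + k - e3 - e4) := by
  simp [LL2, mem_descList]

theorem mem3 {n : ℕ} (G : Good d e1 e2 e3 e4 k m) :
    n ∈ LL3 d e1 e3 e4 k m ↔ (1 ≤ n ∧ n ≤ k) ∨ (e4 + 1 ≤ n ∧ n ≤ m + e1 - 1) ∨
      (m + d + 1 + k - e3 - e4 ≤ n ∧ n ≤ m) ∨ (m + e1 ≤ n ∧ n ≤ d) := by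
  simp [LL3, mem_descList, mem_ascList]

theorem mem4 {n : ℕ} (G : Good d e1 e2 e3 e4 k m) :
    n ∈ LL4 e4 ↔ 1 ≤ n ∧ n ≤ e4 := by
  simp [LL4, mem_ascList]

theorem bnd1 (G : Good d e1 e2 e3 e4 k m) : ∀ x ∈ LL1 e1 m, 1 ≤ x ∧ x ≤ d := by
  intro x hx
  rw [mem1 G] at hx
  obtain ⟨_, h1, h12, h23, h34, h4d, hsum, hk1, hk2, hm1, hm2, hm3⟩ := G
  omega

theorem bnd2 (G : Good d e1 e2 e3 e4 k m) : ∀ x ∈ LL2 d e1 e3 e4 k m, 1 ≤ x ∧ x ≤ d := by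
  intro x hx
  rw [mem2 G] at hx
  obtain ⟨_, h1, h12, h23, h34, h4d, hsum, hk1, hk2, hm1, hm2, hm3⟩ := G
  omega

theorem bnd3 (G : Good d e1 e2 e3 e4 k m) : ∀ x ∈ LL3 d e1 e3 e4 k m, 1 ≤ x ∧ x ≤ d := by
  intro x hx
  rw [mem3 G] at hx
  obtain ⟨_, h1, h12, h23, h34, h4d, hsum, hk1, hk2, hm1, hm2, hm3⟩ := G
  omega

theorem bnd4 (G : Good d e1 e2 e3 e4 k m) : ∀ x ∈ LL4 e4, 1 ≤ x ∧ x ≤ d := by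
  intro x hx
  rw [mem4 G] at hx
  obtain ⟨_, h1, h12, h23, h34, h4d, hsum, hk1, hk2, hm1, hm2, hm3⟩ := G
  omega

theorem nodup1 (G : Good d e1 e2 e3 e4 k m) : (LL1 e1 m).Nodup := nodup_descList _ _

theorem nodup2 (G : Good d e1 e2 e3 e4 k m) : (LL2 d e1 e3 e4 k m).Nodup := by
  obtain ⟨_, h1, h12, h23, h34, h4d, hsum, hk1, hk2, hm1, hm2, hm3⟩ := G
  simp only [LL2, List.nodup_append, List.Disjoint, List.mem_append, mem_ascList,
    mem_descList, nodup_ascList, nodup_descList, true_and]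
  and_intros <;> (intro a ha hb; omega)

theorem nodup3 (G : Good d e1 e2 e3 e4 k m) : (LL3 d e1 e3 e4 k m).Nodup := by
  obtain ⟨_, h1, h12, h23, h34, h4d, hsum, hk1, hk2, hm1, hm2, hm3⟩ := G
  simp only [LL3, List.nodup_append, List.Disjoint, List.mem_append, mem_ascList,
    mem_descList, nodup_ascList, nodup_descList, true_and]
  and_intros <;> (intro a ha hb; omega)

theorem nodup4 (G : Good d e1 e2 e3 e4 k m) : (LL4 e4).Nodup := nodup_ascList _ _

/-! ### Closed forms for list entries -/

theorem LL1_elem (G : Good d e1 e2 e3 e4 k m) (i : ℕ) (hi : i < e1) :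
    (LL1 e1 m)[i]? = some (m + e1 - 1 - i) := by
  obtain ⟨_, h1, h12, h23, h34, h4d, hsum, hk1, hk2, hm1, hm2, hm3⟩ := G
  rw [LL1, descList_elem _ _ _ (by omega)]

theorem LL4_elem (G : Good d e1 e2 e3 e4 k m) (i : ℕ) (hi : i < e4) :
    (LL4 e4)[i]? = some (1 + i) := by
  obtain ⟨_, h1, h12, h23, h34, h4d, hsum, hk1, hk2, hm1, hm2, hm3⟩ := G
  rw [LL4, ascList_elem _ _ _ (by omega)]

theorem LL2_elem (G : Good d e1 e2 e3 e4 k m) (i : ℕ) (hi : i < e2) :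
    (LL2 d e1 e3 e4 k m)[i]? = some (if i < d + 1 - (m + e1) then d - i
      else m + d + k - e3 - e4 - (i - (d + 1 - (m + e1)))) := by
  obtain ⟨_, h1, h12, h23, h34, h4d, hsum, hk1, hk2, hm1, hm2, hm3⟩ := G
  rw [LL2]
  simp only [List.getElem?_append, List.length_append, length_ascList, length_descList,
    ascList_elem', descList_elem']
  split_ifs <;> first | rfl | (simp only [Option.some.injEq]; omega) | (exfalso; omega)

theorem LL3_elem (G : Good d e1 e2 e3 e4 k m) (i : ℕ) (hi : i < e3) :
    (LL3 d e1 e3 e4 k m)[i]? = some (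
      if i < k then k - i
      else if i < k + (m + e1 - 1 - e4) then e4 + 1 + (i - k)
      else if i < k + (m + e1 - 1 - e4) + (e3 + e4 - d - k) then
        m - (i - k - (m + e1 - 1 - e4))
      else m + e1 + (i - k - (m + e1 - 1 - e4) - (e3 + e4 - d - k))) := by
  obtain ⟨_, h1, h12, h23, h34, h4d, hsum, hk1, hk2, hm1, hm2, hm3⟩ := G
  rw [LL3]
  simp only [List.getElem?_append, List.length_append, length_ascList, length_descList,
    ascList_elem', descList_elem']
  split_ifs <;> first | rfl | (simp only [Option.some.injEq]; omega) | (exfalso; omega)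

/-! ### Pointwise descriptions -/

def ff1 (e1 m n : ℕ) : ℕ :=
  if n = m then m + e1 - 1 else if m + 1 ≤ n ∧ n ≤ m + e1 - 1 then n - 1 else n

def ff2 (d e1 e3 e4 k m n : ℕ) : ℕ :=
  if n = k then (if m + e1 ≤ d then d else m + d + k - e3 - e4)
  else if k + 1 ≤ n ∧ n ≤ m + d + k - e3 - e4 then n - 1
  else if n = m + e1 then m + d + k - e3 - e4
  else if m + e1 + 1 ≤ n ∧ n ≤ d then n - 1
  else n

def ff3 (d e1 e3 e4 k m n : ℕ) : ℕ :=
  if n = 1 then (if e4 + 1 ≤ m + e1 - 1 then e4 + 1 else m)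
  else if n ≤ k then n - 1
  else if n = m + d + 1 + k - e3 - e4 then (if m + e1 ≤ d then m + e1 else k)
  else if m + d + 2 + k - e3 - e4 ≤ n ∧ n ≤ m then n - 1
  else if n = m + e1 - 1 ∧ e4 + 1 ≤ m + e1 - 1 then m
  else if e4 + 1 ≤ n ∧ n + 2 ≤ m + e1 then n + 1
  else if n = d ∧ m + e1 ≤ d then k
  else if m + e1 ≤ n ∧ n + 1 ≤ d then n + 1
  else n

def ff4 (e4 n : ℕ) : ℕ :=
  if n = e4 then 1 else if n + 1 ≤ e4 then n + 1 else n

variable (hd : 0 < d)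

theorem ap4 (G : Good d e1 e2 e3 e4 k m) (n : ℕ) (h1 : 1 ≤ n) (h2 : n ≤ d) :
    ((LL4 e4).map (toFin d hd)).formPerm (toFin d hd n) = toFin d hd (ff4 e4 n) := by
  have Gc := G
  have hb := bnd4 G
  have hnd := nodup4 G
  obtain ⟨_, h1e, h12, h23, h34, h4d, hsum, hk1, hk2, hm1, hm2, hm3⟩ := G
  by_cases c1 : n = e4
  · refine formPerm_wrap hd _ hb hnd (e4 - 1) n _ ?_ ?_ ?_
    · rw [LL4_elem Gc _ (by omega)]; simp only [Option.some.injEq]; omega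
    · rw [len4 Gc]; omega
    · rw [LL4_elem Gc _ (by omega)]
      simp only [ff4, Option.some.injEq]; split_ifs <;> omega
  by_cases c2 : n + 1 ≤ e4
  · refine formPerm_step hd _ hb hnd (n - 1) n _ ?_ ?_
    · rw [LL4_elem Gc _ (by omega)]; simp only [Option.some.injEq]; omega
    · have : n - 1 + 1 = n := by omega
      rw [this, LL4_elem Gc _ (by omega)]
      simp only [ff4, Option.some.injEq]; split_ifs <;> omega
  · have hval : ff4 e4 n = n := by simp only [ff4]; split_ifs <;> omega
    rw [hval]
    refine formPerm_fix hd _ hb n h1 h2 ?_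
    rw [mem4 Gc]; omega

theorem ap1 (G : Good d e1 e2 e3 e4 k m) (n : ℕ) (h1 : 1 ≤ n) (h2 : n ≤ d) :
    ((LL1 e1 m).map (toFin d hd)).formPerm (toFin d hd n) = toFin d hd (ff1 e1 m n) := by
  have Gc := G
  have hb := bnd1 G
  have hnd := nodup1 G
  obtain ⟨_, h1e, h12, h23, h34, h4d, hsum, hk1, hk2, hm1, hm2, hm3⟩ := G
  by_cases c1 : n = m
  · refine formPerm_wrap hd _ hb hnd (e1 - 1) n _ ?_ ?_ ?_
    · rw [LL1_elem Gc _ (by omega)]; simp only [Option.some.injEq]; omega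
    · rw [len1 Gc]; omega
    · rw [LL1_elem Gc _ (by omega)]
      simp only [ff1, Option.some.injEq]; split_ifs <;> omega
  by_cases c2 : m + 1 ≤ n ∧ n ≤ m + e1 - 1
  · refine formPerm_step hd _ hb hnd (m + e1 - 1 - n) n _ ?_ ?_
    · rw [LL1_elem Gc _ (by omega)]; simp only [Option.some.injEq]; omega
    · rw [LL1_elem Gc _ (by omega)]
      simp only [ff1, Option.some.injEq]; split_ifs <;> omega
  · have hval : ff1 e1 m n = n := by simp only [ff1]; split_ifs <;> omega
    rw [hval]
    refine formPerm_fix hd _ hb n h1 h2 ?_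
    rw [mem1 Gc]; omega

theorem ap2 (G : Good d e1 e2 e3 e4 k m) (n : ℕ) (h1 : 1 ≤ n) (h2 : n ≤ d) :
    ((LL2 d e1 e3 e4 k m).map (toFin d hd)).formPerm (toFin d hd n) =
      toFin d hd (ff2 d e1 e3 e4 k m n) := by
  have Gc := G
  have hb := bnd2 G
  have hnd := nodup2 G
  obtain ⟨_, h1e, h12, h23, h34, h4d, hsum, hk1, hk2, hm1, hm2, hm3⟩ := G
  by_cases c1 : n = k
  · refine formPerm_wrap hd _ hb hnd (e2 - 1) n _ ?_ ?_ ?_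
    · rw [LL2_elem Gc _ (by omega)]
      simp only [Option.some.injEq]; split_ifs <;> omega
    · rw [len2 Gc]; omega
    · rw [LL2_elem Gc _ (by omega)]
      simp only [ff2, Option.some.injEq]; split_ifs <;> omega
  by_cases c2 : k + 1 ≤ n ∧ n ≤ m + d + k - e3 - e4
  · refine formPerm_step hd _ hb hnd (d + 1 - (m + e1) + (m + d + k - e3 - e4 - n)) n _ ?_ ?_
    · rw [LL2_elem Gc _ (by omega)]
      simp only [Option.some.injEq]; split_ifs <;> omega
    · rw [LL2_elem Gc _ (by omega)]
      simp only [ff2, Option.some.injEq]; split_ifs <;> omega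
  by_cases c3 : n = m + e1
  · refine formPerm_step hd _ hb hnd (d - n) n _ ?_ ?_
    · rw [LL2_elem Gc _ (by omega)]
      simp only [Option.some.injEq]; split_ifs <;> omega
    · rw [LL2_elem Gc _ (by omega)]
      simp only [ff2, Option.some.injEq]; split_ifs <;> omega
  by_cases c4 : m + e1 + 1 ≤ n ∧ n ≤ d
  · refine formPerm_step hd _ hb hnd (d - n) n _ ?_ ?_
    · rw [LL2_elem Gc _ (by omega)]
      simp only [Option.some.injEq]; split_ifs <;> omega
    · rw [LL2_elem Gc _ (by omega)]
      simp only [ff2, Option.some.injEq]; split_ifs <;> omega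
  · have hval : ff2 d e1 e3 e4 k m n = n := by simp only [ff2]; split_ifs <;> omega
    rw [hval]
    refine formPerm_fix hd _ hb n h1 h2 ?_
    rw [mem2 Gc]; omega

set_option maxHeartbeats 2000000 in
theorem ap3 (G : Good d e1 e2 e3 e4 k m) (n : ℕ) (h1 : 1 ≤ n) (h2 : n ≤ d) :
    ((LL3 d e1 e3 e4 k m).map (toFin d hd)).formPerm (toFin d hd n) =
      toFin d hd (ff3 d e1 e3 e4 k m n) := by
  have Gc := G
  have hb := bnd3 G
  have hnd := nodup3 G
  obtain ⟨_, h1e, h12, h23, h34, h4d, hsum, hk1, hk2, hm1, hm2, hm3⟩ := G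
  by_cases c1 : n = 1
  · refine formPerm_step hd _ hb hnd (k - 1) n _ ?_ ?_
    · rw [LL3_elem Gc _ (by omega)]
      simp only [Option.some.injEq]; split_ifs <;> omega
    · rw [LL3_elem Gc _ (by omega)]
      simp only [ff3, Option.some.injEq]; split_ifs <;> omega
  by_cases c2 : 2 ≤ n ∧ n ≤ k
  · refine formPerm_step hd _ hb hnd (k - n) n _ ?_ ?_
    · rw [LL3_elem Gc _ (by omega)]
      simp only [Option.some.injEq]; split_ifs <;> omega
    · rw [LL3_elem Gc _ (by omega)]
      simp only [ff3, Option.some.injEq]; split_ifs <;> omega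
  by_cases c3 : n = m + d + 1 + k - e3 - e4
  · by_cases c3' : m + e1 ≤ d
    · refine formPerm_step hd _ hb hnd
        (k + (m + e1 - 1 - e4) + (e3 + e4 - d - k) - 1) n _ ?_ ?_
      · rw [LL3_elem Gc _ (by omega)]
        simp only [Option.some.injEq]; split_ifs <;> omega
      · rw [LL3_elem Gc _ (by omega)]
        simp only [ff3, Option.some.injEq]; split_ifs <;> omega
    · refine formPerm_wrap hd _ hb hnd (e3 - 1) n _ ?_ ?_ ?_
      · rw [LL3_elem Gc _ (by omega)]
        simp only [Option.some.injEq]; split_ifs <;> omega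
      · rw [len3 Gc]; omega
      · rw [LL3_elem Gc _ (by omega)]
        simp only [ff3, Option.some.injEq]; split_ifs <;> omega
  by_cases c4 : m + d + 2 + k - e3 - e4 ≤ n ∧ n ≤ m
  · refine formPerm_step hd _ hb hnd (k + (m + e1 - 1 - e4) + (m - n)) n _ ?_ ?_
    · rw [LL3_elem Gc _ (by omega)]
      simp only [Option.some.injEq]; split_ifs <;> omega
    · rw [LL3_elem Gc _ (by omega)]
      simp only [ff3, Option.some.injEq]; split_ifs <;> omega
  by_cases c5 : n = m + e1 - 1 ∧ e4 + 1 ≤ m + e1 - 1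
  · refine formPerm_step hd _ hb hnd (k + (m + e1 - 1 - e4) - 1) n _ ?_ ?_
    · rw [LL3_elem Gc _ (by omega)]
      simp only [Option.some.injEq]; split_ifs <;> omega
    · rw [LL3_elem Gc _ (by omega)]
      simp only [ff3, Option.some.injEq]; split_ifs <;> omega
  by_cases c6 : e4 + 1 ≤ n ∧ n + 2 ≤ m + e1
  · refine formPerm_step hd _ hb hnd (k + (n - e4 - 1)) n _ ?_ ?_
    · rw [LL3_elem Gc _ (by omega)]
      simp only [Option.some.injEq]; split_ifs <;> omega
    · rw [LL3_elem Gc _ (by omega)]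
      simp only [ff3, Option.some.injEq]; split_ifs <;> omega
  by_cases c7 : n = d ∧ m + e1 ≤ d
  · refine formPerm_wrap hd _ hb hnd (e3 - 1) n _ ?_ ?_ ?_
    · rw [LL3_elem Gc _ (by omega)]
      simp only [Option.some.injEq]; split_ifs <;> omega
    · rw [len3 Gc]; omega
    · rw [LL3_elem Gc _ (by omega)]
      simp only [ff3, Option.some.injEq]; split_ifs <;> omega
  by_cases c8 : m + e1 ≤ n ∧ n + 1 ≤ d
  · refine formPerm_step hd _ hb hnd
      (k + (m + e1 - 1 - e4) + (e3 + e4 - d - k) + (n - (m + e1))) n _ ?_ ?_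
    · rw [LL3_elem Gc _ (by omega)]
      simp only [Option.some.injEq]; split_ifs <;> omega
    · rw [LL3_elem Gc _ (by omega)]
      simp only [ff3, Option.some.injEq]; split_ifs <;> omega
  · have hval : ff3 d e1 e3 e4 k m n = n := by simp only [ff3]; split_ifs <;> omega
    rw [hval]
    refine formPerm_fix hd _ hb n h1 h2 ?_
    rw [mem3 Gc]; omega

set_option maxHeartbeats 8000000 in
theorem comp (G : Good d e1 e2 e3 e4 k m) (n : ℕ) (hn1 : 1 ≤ n) (hn2 : n ≤ d) :
    ff1 e1 m (ff2 d e1 e3 e4 k m (ff3 d e1 e3 e4 k m (ff4 e4 n))) = n := by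
  obtain ⟨_, h1, h12, h23, h34, h4d, hsum, hk1, hk2, hm1, hm2, hm3⟩ := G
  by_cases c1 : n + 1 ≤ k
  · have h4 : ff4 e4 n = n + 1 := by simp only [ff4]; split_ifs <;> omega
    have h3 : ff3 d e1 e3 e4 k m (n + 1) = n := by simp only [ff3]; split_ifs <;> omega
    have h2 : ff2 d e1 e3 e4 k m n = n := by simp only [ff2]; split_ifs <;> omega
    have h1' : ff1 e1 m n = n := by simp only [ff1]; split_ifs <;> omega
    rw [h4, h3, h2, h1']
  by_cases c2 : n = k
  · have h4 : ff4 e4 n = n + 1 := by simp only [ff4]; split_ifs <;> omega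
    by_cases s1 : k + 1 ≤ m + d + k - e3 - e4
    · have h3 : ff3 d e1 e3 e4 k m (n + 1) = n + 1 := by
        simp only [ff3]; split_ifs <;> omega
      have h2 : ff2 d e1 e3 e4 k m (n + 1) = n := by simp only [ff2]; split_ifs <;> omega
      have h1' : ff1 e1 m n = n := by simp only [ff1]; split_ifs <;> omega
      rw [h4, h3, h2, h1']
    · by_cases t1 : m + e1 ≤ d
      · have h3 : ff3 d e1 e3 e4 k m (n + 1) = m + e1 := by
          simp only [ff3]; split_ifs <;> omega
        have h2 : ff2 d e1 e3 e4 k m (m + e1) = n := by simp only [ff2]; split_ifs <;> omega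
        have h1' : ff1 e1 m n = n := by simp only [ff1]; split_ifs <;> omega
        rw [h4, h3, h2, h1']
      · have h3 : ff3 d e1 e3 e4 k m (n + 1) = k := by
          simp only [ff3]; split_ifs <;> omega
        have h2 : ff2 d e1 e3 e4 k m k = n := by simp only [ff2]; split_ifs <;> omega
        have h1' : ff1 e1 m n = n := by simp only [ff1]; split_ifs <;> omega
        rw [h4, h3, h2, h1']
  by_cases c3 : n + 1 ≤ m + d + k - e3 - e4
  · have h4 : ff4 e4 n = n + 1 := by simp only [ff4]; split_ifs <;> omega
    have h3 : ff3 d e1 e3 e4 k m (n + 1) = n + 1 := by simp only [ff3]; split_ifs <;> omega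
    have h2 : ff2 d e1 e3 e4 k m (n + 1) = n := by simp only [ff2]; split_ifs <;> omega
    have h1' : ff1 e1 m n = n := by simp only [ff1]; split_ifs <;> omega
    rw [h4, h3, h2, h1']
  by_cases c4 : n = m + d + k - e3 - e4
  · have h4 : ff4 e4 n = n + 1 := by simp only [ff4]; split_ifs <;> omega
    by_cases t1 : m + e1 ≤ d
    · have h3 : ff3 d e1 e3 e4 k m (n + 1) = m + e1 := by
        simp only [ff3]; split_ifs <;> omega
      have h2 : ff2 d e1 e3 e4 k m (m + e1) = n := by simp only [ff2]; split_ifs <;> omega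
      have h1' : ff1 e1 m n = n := by simp only [ff1]; split_ifs <;> omega
      rw [h4, h3, h2, h1']
    · have h3 : ff3 d e1 e3 e4 k m (n + 1) = k := by
        simp only [ff3]; split_ifs <;> omega
      have h2 : ff2 d e1 e3 e4 k m k = n := by simp only [ff2]; split_ifs <;> omega
      have h1' : ff1 e1 m n = n := by simp only [ff1]; split_ifs <;> omega
      rw [h4, h3, h2, h1']
  by_cases c5 : n + 1 ≤ m
  · have h4 : ff4 e4 n = n + 1 := by simp only [ff4]; split_ifs <;> omega
    have h3 : ff3 d e1 e3 e4 k m (n + 1) = n := by simp only [ff3]; split_ifs <;> omega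
    have h2 : ff2 d e1 e3 e4 k m n = n := by simp only [ff2]; split_ifs <;> omega
    have h1' : ff1 e1 m n = n := by simp only [ff1]; split_ifs <;> omega
    rw [h4, h3, h2, h1']
  by_cases c6 : n + 1 ≤ e4
  · have h4 : ff4 e4 n = n + 1 := by simp only [ff4]; split_ifs <;> omega
    have h3 : ff3 d e1 e3 e4 k m (n + 1) = n + 1 := by simp only [ff3]; split_ifs <;> omega
    have h2 : ff2 d e1 e3 e4 k m (n + 1) = n + 1 := by simp only [ff2]; split_ifs <;> omega
    have h1' : ff1 e1 m (n + 1) = n := by simp only [ff1]; split_ifs <;> omega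
    rw [h4, h3, h2, h1']
  by_cases c7 : n = e4
  · have h4 : ff4 e4 n = 1 := by simp only [ff4]; split_ifs <;> omega
    by_cases t1 : e4 + 1 ≤ m + e1 - 1
    · have h3 : ff3 d e1 e3 e4 k m 1 = e4 + 1 := by simp only [ff3]; split_ifs <;> omega
      have h2 : ff2 d e1 e3 e4 k m (e4 + 1) = e4 + 1 := by
        simp only [ff2]; split_ifs <;> omega
      have h1' : ff1 e1 m (e4 + 1) = n := by simp only [ff1]; split_ifs <;> omega
      rw [h4, h3, h2, h1']
    · have h3 : ff3 d e1 e3 e4 k m 1 = m := by simp only [ff3]; split_ifs <;> omega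
      have h2 : ff2 d e1 e3 e4 k m m = m := by simp only [ff2]; split_ifs <;> omega
      have h1' : ff1 e1 m m = n := by simp only [ff1]; split_ifs <;> omega
      rw [h4, h3, h2, h1']
  by_cases c8 : n + 2 ≤ m + e1
  · have h4 : ff4 e4 n = n := by simp only [ff4]; split_ifs <;> omega
    have h3 : ff3 d e1 e3 e4 k m n = n + 1 := by simp only [ff3]; split_ifs <;> omega
    have h2 : ff2 d e1 e3 e4 k m (n + 1) = n + 1 := by simp only [ff2]; split_ifs <;> omega
    have h1' : ff1 e1 m (n + 1) = n := by simp only [ff1]; split_ifs <;> omega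
    rw [h4, h3, h2, h1']
  by_cases c9 : n = m + e1 - 1
  · have h4 : ff4 e4 n = n := by simp only [ff4]; split_ifs <;> omega
    have h3 : ff3 d e1 e3 e4 k m n = m := by simp only [ff3]; split_ifs <;> omega
    have h2 : ff2 d e1 e3 e4 k m m = m := by simp only [ff2]; split_ifs <;> omega
    have h1' : ff1 e1 m m = n := by simp only [ff1]; split_ifs <;> omega
    rw [h4, h3, h2, h1']
  by_cases c10 : n + 1 ≤ d
  · have h4 : ff4 e4 n = n := by simp only [ff4]; split_ifs <;> omega
    have h3 : ff3 d e1 e3 e4 k m n = n + 1 := by simp only [ff3]; split_ifs <;> omega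
    have h2 : ff2 d e1 e3 e4 k m (n + 1) = n := by simp only [ff2]; split_ifs <;> omega
    have h1' : ff1 e1 m n = n := by simp only [ff1]; split_ifs <;> omega
    rw [h4, h3, h2, h1']
  · have h4 : ff4 e4 n = n := by simp only [ff4]; split_ifs <;> omega
    have h3 : ff3 d e1 e3 e4 k m n = k := by simp only [ff3]; split_ifs <;> omega
    have h2 : ff2 d e1 e3 e4 k m k = d := by simp only [ff2]; split_ifs <;> omega
    have h1' : ff1 e1 m d = n := by simp only [ff1]; split_ifs <;> omega
    rw [h4, h3, h2, h1']

end FPf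

namespace FPf
variable {d e1 e2 e3 e4 k m : ℕ}

theorem rng2 (G : Good d e1 e2 e3 e4 k m) (n : ℕ) (h1 : 1 ≤ n) (h2 : n ≤ d) :
    1 ≤ ff2 d e1 e3 e4 k m n ∧ ff2 d e1 e3 e4 k m n ≤ d := by
  obtain ⟨_, h1e, h12, h23, h34, h4d, hsum, hk1, hk2, hm1, hm2, hm3⟩ := G
  simp only [ff2]; split_ifs <;> omega

theorem rng3 (G : Good d e1 e2 e3 e4 k m) (n : ℕ) (h1 : 1 ≤ n) (h2 : n ≤ d) :
    1 ≤ ff3 d e1 e3 e4 k m n ∧ ff3 d e1 e3 e4 k m n ≤ d := by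
  obtain ⟨_, h1e, h12, h23, h34, h4d, hsum, hk1, hk2, hm1, hm2, hm3⟩ := G
  simp only [ff3]; split_ifs <;> omega

theorem rng4 (G : Good d e1 e2 e3 e4 k m) (n : ℕ) (h1 : 1 ≤ n) (h2 : n ≤ d) :
    1 ≤ ff4 e4 n ∧ ff4 e4 n ≤ d := by
  obtain ⟨_, h1e, h12, h23, h34, h4d, hsum, hk1, hk2, hm1, hm2, hm3⟩ := G
  simp only [ff4]; split_ifs <;> omega

end FPf

open FPf

/-- For all admissible parameters `(k, m)` of family II, `F_II(k, m)` is a Hurwitz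
factorization for `(d, 4, 0, (e₁, e₂, e₃, e₄))`, and `σ₃ σ₄` is a product of two
disjoint nontrivial cycles. -/
theorem FII_is_hurwitz_factorization
    (d e1 e2 e3 e4 : ℕ) (hd : 0 < d)
    (h1 : 2 ≤ e1) (h12 : e1 ≤ e2) (h23 : e2 ≤ e3) (h34 : e3 ≤ e4) (h4d : e4 ≤ d)
    (hsum : 2 * d - 2 = (e1 - 1) + (e2 - 1) + (e3 - 1) + (e4 - 1))
    (k m : ℕ) (hkm : AdmII d e1 e3 e4 k m) :
    HurwitzFactorization d 4 ![e1, e2, e3, e4] (FII d hd e1 e3 e4 k m) ∧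
    ∃ c1 c2 : Equiv.Perm (Fin d), c1.IsCycle ∧ c2.IsCycle ∧
      Disjoint c1.support c2.support ∧
      FII d hd e1 e3 e4 k m 2 * FII d hd e1 e3 e4 k m 3 = c1 * c2 := by
  obtain ⟨hk1, hk2, hm1, hm2, hm3⟩ := hkm
  have hG : Good d e1 e2 e3 e4 k m :=
    ⟨hd, h1, h12, h23, h34, h4d, by omega, by omega, by omega, by omega, by omega, by omega⟩
  set σ := FII d hd e1 e3 e4 k m with hσ
  have hσ0 : σ 0 = ((LL1 e1 m).map (toFin d hd)).formPerm := rfl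
  have hσ1 : σ 1 = ((LL2 d e1 e3 e4 k m).map (toFin d hd)).formPerm := rfl
  have hσ2 : σ 2 = ((LL3 d e1 e3 e4 k m).map (toFin d hd)).formPerm := rfl
  have hσ3 : σ 3 = ((LL4 e4).map (toFin d hd)).formPerm := rfl
  have hfix : ∀ x : Fin d, toFin d hd (x.1 + 1) = x := by
    intro x
    apply Fin.ext
    rw [toFin_val hd _ (by omega) (by omega)]
    omega
  -- the product is 1
  have hprod : (List.ofFn σ).prod = 1 := by
    have hofn : (List.ofFn σ).prod = σ 0 * (σ 1 * (σ 2 * (σ 3 * 1))) := rfl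
    rw [hofn, mul_one]
    ext x
    have hx1 : 1 ≤ x.1 + 1 := by omega
    have hx2 : x.1 + 1 ≤ d := by omega
    have r4 := rng4 hG (x.1 + 1) hx1 hx2
    have r3 := rng3 hG _ r4.1 r4.2
    have r2 := rng2 hG _ r3.1 r3.2
    simp only [Equiv.Perm.mul_apply, Equiv.Perm.one_apply]
    conv_lhs => rw [← hfix x]
    rw [hσ3, ap4 hd hG _ hx1 hx2, hσ2, ap3 hd hG _ r4.1 r4.2, hσ1, ap2 hd hG _ r3.1 r3.2,
      hσ0, ap1 hd hG _ r2.1 r2.2, comp hG _ hx1 hx2, hfix x]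
  -- cycle structure and support cards
  have hcyc0 : (σ 0).IsCycle := by
    rw [hσ0]
    exact List.isCycle_formPerm (nodup_map hd _ (bnd1 hG) (nodup1 hG))
      (by rw [List.length_map, len1 hG]; omega)
  have hcyc1 : (σ 1).IsCycle := by
    rw [hσ1]
    exact List.isCycle_formPerm (nodup_map hd _ (bnd2 hG) (nodup2 hG))
      (by rw [List.length_map, len2 hG]; omega)
  have hcyc2 : (σ 2).IsCycle := by
    rw [hσ2]
    exact List.isCycle_formPerm (nodup_map hd _ (bnd3 hG) (nodup3 hG))
      (by rw [List.length_map, len3 hG]; omega)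
  have hcyc3 : (σ 3).IsCycle := by
    rw [hσ3]
    exact List.isCycle_formPerm (nodup_map hd _ (bnd4 hG) (nodup4 hG))
      (by rw [List.length_map, len4 hG]; omega)
  have hsupp0 : (σ 0).support = ((LL1 e1 m).map (toFin d hd)).toFinset := by
    rw [hσ0]
    refine List.support_formPerm_of_nodup _ (nodup_map hd _ (bnd1 hG) (nodup1 hG)) ?_
    intro x hx
    have := congrArg List.length hx
    rw [List.length_map, len1 hG] at this
    simp at this; omega
  have hsupp1 : (σ 1).support = ((LL2 d e1 e3 e4 k m).map (toFin d hd)).toFinset := by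
    rw [hσ1]
    refine List.support_formPerm_of_nodup _ (nodup_map hd _ (bnd2 hG) (nodup2 hG)) ?_
    intro x hx
    have := congrArg List.length hx
    rw [List.length_map, len2 hG] at this
    simp at this; omega
  have hcard0 : (σ 0).support.card = e1 := by
    rw [hsupp0, List.toFinset_card_of_nodup (nodup_map hd _ (bnd1 hG) (nodup1 hG)),
      List.length_map, len1 hG]
  have hcard1 : (σ 1).support.card = e2 := by
    rw [hsupp1, List.toFinset_card_of_nodup (nodup_map hd _ (bnd2 hG) (nodup2 hG)),
      List.length_map, len2 hG]
  have hcard2 : (σ 2).support.card = e3 := by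
    rw [hσ2, List.support_formPerm_of_nodup _ (nodup_map hd _ (bnd3 hG) (nodup3 hG))
      (fun x hx => by
        have := congrArg List.length hx
        rw [List.length_map, len3 hG] at this
        simp at this; omega),
      List.toFinset_card_of_nodup (nodup_map hd _ (bnd3 hG) (nodup3 hG)),
      List.length_map, len3 hG]
  have hcard3 : (σ 3).support.card = e4 := by
    rw [hσ3, List.support_formPerm_of_nodup _ (nodup_map hd _ (bnd4 hG) (nodup4 hG))
      (fun x hx => by
        have := congrArg List.length hx
        rw [List.length_map, len4 hG] at this
        simp at this; omega),
      List.toFinset_card_of_nodup (nodup_map hd _ (bnd4 hG) (nodup4 hG)),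
      List.length_map, len4 hG]
  -- transitivity
  have hkey : ∀ n, 1 ≤ n → n ≤ d →
      ∃ g ∈ Subgroup.closure (Set.range σ), g (toFin d hd n) = toFin d hd 1 := by
    intro n
    induction n using Nat.strong_induction_on with
    | _ n ih =>
      intro hn1 hn2
      rcases Nat.lt_or_ge n 2 with hsm | hlg
      · have : n = 1 := by omega
        subst this
        exact ⟨1, one_mem _, rfl⟩
      by_cases cA : n ≤ e4
      · have hstep : σ 3 (toFin d hd (n - 1)) = toFin d hd n := by
          rw [hσ3, ap4 hd hG (n - 1) (by omega) (by omega)]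
          congr 1
          simp only [ff4]; split_ifs <;> omega
        obtain ⟨g, hg, hg1⟩ := ih (n - 1) (by omega) (by omega) (by omega)
        refine ⟨g * (σ 3)⁻¹, mul_mem hg (inv_mem (Subgroup.subset_closure ⟨3, rfl⟩)), ?_⟩
        simp only [Equiv.Perm.mul_apply]
        rw [← hstep, Equiv.Perm.inv_def, Equiv.symm_apply_apply, hg1]
      by_cases cB : n ≤ m + e1 - 1
      · have hstep : σ 0 (toFin d hd n) = toFin d hd (n - 1) := by
          rw [hσ0, ap1 hd hG n (by omega) hn2]
          congr 1
          simp only [ff1]; split_ifs <;> omega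
        obtain ⟨g, hg, hg1⟩ := ih (n - 1) (by omega) (by omega) (by omega)
        refine ⟨g * σ 0, mul_mem hg (Subgroup.subset_closure ⟨0, rfl⟩), ?_⟩
        simp only [Equiv.Perm.mul_apply]
        rw [hstep, hg1]
      · have hlt : ff2 d e1 e3 e4 k m n < n ∧ 1 ≤ ff2 d e1 e3 e4 k m n ∧
            ff2 d e1 e3 e4 k m n ≤ d := by
          simp only [ff2]; split_ifs <;> omega
        have hstep : σ 1 (toFin d hd n) = toFin d hd (ff2 d e1 e3 e4 k m n) := by
          rw [hσ1, ap2 hd hG n (by omega) hn2]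
        obtain ⟨g, hg, hg1⟩ := ih _ hlt.1 hlt.2.1 hlt.2.2
        refine ⟨g * σ 1, mul_mem hg (Subgroup.subset_closure ⟨1, rfl⟩), ?_⟩
        simp only [Equiv.Perm.mul_apply]
        rw [hstep, hg1]
  have htrans : ∀ x y : Fin d, ∃ g ∈ Subgroup.closure (Set.range σ), g x = y := by
    intro x y
    obtain ⟨gx, hgx, hgx1⟩ := hkey (x.1 + 1) (by omega) (by omega)
    obtain ⟨gy, hgy, hgy1⟩ := hkey (y.1 + 1) (by omega) (by omega)
    refine ⟨gy⁻¹ * gx, mul_mem (inv_mem hgy) hgx, ?_⟩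
    simp only [Equiv.Perm.mul_apply]
    rw [hfix x] at hgx1
    rw [hfix y] at hgy1
    rw [hgx1, ← hgy1, Equiv.Perm.inv_def, Equiv.symm_apply_apply]
  -- disjointness of σ 0 and σ 1 supports
  have hdisj : Disjoint (σ 1).support (σ 0).support := by
    rw [hsupp0, hsupp1, Finset.disjoint_left]
    intro a ha hb
    rw [List.mem_toFinset, List.mem_map] at ha hb
    obtain ⟨x2, hx2, he2⟩ := ha
    obtain ⟨x1, hx1, he1⟩ := hb
    have hbx2 := bnd2 hG x2 hx2
    have hbx1 := bnd1 hG x1 hx1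
    have : x2 = x1 := toFin_inj hd hbx2.1 hbx2.2 hbx1.1 hbx1.2 (he2.trans he1.symm)
    subst this
    rw [mem1 hG] at hx1
    rw [mem2 hG] at hx2
    obtain ⟨_, h1e, h12', h23', h34', h4d', hsum', hk1', hk2', hm1', hm2', hm3'⟩ := hG
    omega
  -- final assembly
  refine ⟨⟨?_, hprod, htrans⟩, (σ 1)⁻¹, (σ 0)⁻¹, hcyc1.inv, hcyc0.inv, ?_, ?_⟩
  · intro i
    fin_cases i
    · exact ⟨hcyc0, hcard0⟩
    · exact ⟨hcyc1, hcard1⟩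
    · exact ⟨hcyc2, hcard2⟩
    · exact ⟨hcyc3, hcard3⟩
  · simpa only [Equiv.Perm.support_inv] using hdisj
  · have hp : σ 0 * σ 1 * (σ 2 * σ 3) = 1 := by
      have hofn : (List.ofFn σ).prod = σ 0 * (σ 1 * (σ 2 * (σ 3 * 1))) := rfl
      rw [hofn] at hprod
      rw [← hprod]
      group
    have := eq_inv_of_mul_eq_one_right hp
    rw [mul_inv_rev] at this
    exact this
end

section
/- Assume Situation (*). No two of the tuples in the families F_I and F_II with distinct parameters are equivalent: if F_I(k, ℓ) is equivalent to F_I(k', ℓ') then (k, ℓ) = (k', ℓ'); if F_II(k, m) is equivalent to F_II(k', m') then (k, m) = (k', m'); and no F_I(k, ℓ) is equivalent to any F_II(k', m') (parameters ranging over the admissible ranges for each family). -/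
/-!
A simultaneous conjugator `τ` maps the support of each `σᵢ` onto the support of `σᵢ'` and
commutes with every `σᵢ` the two tuples share, in particular with `σ₄ = (1, 2, …, e₄)`.
Cardinalities of intersections of supports (`{1, …, k}` in family I, `{m, …, e₄}` in family II)
recover the first parameter. If `τ` commutes with `σ₄` and maps a proper arc `{a, …, b}` of `σ₄`
onto an arc `{a', …, b'}`, then `τ a = a'`, as `a` is the only point of its arc whose
`σ₄`-predecessor lies outside it; and a permutation commuting with a cycle and fixing one point of
its support fixes the whole support. In family II this makes `τ` fix `k` and send it to `k'`.
In family I it makes `τ` fix `ℓ`, the unique point of `supp σ₁ ∩ supp σ₂` in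
`{1, …, e₃ + e₄ - k}` (it is both the first and the last point of the backward orbit
`σ^{-j}(ℓ)` that `σ₂` and `σ₁` share out), so `ℓ = ℓ'`. Finally `supp σ₁ ∩ supp σ₂` contains `ℓ`
in family I and is empty in family II.
-/

open Equiv Finset

theorem Nat.ModEq.eq_or_eq_add_of_le {n i j : ℕ} (h : i ≡ j [MOD n]) (hij : i ≤ j)
    (hjn : j ≤ i + n) : j = i ∨ j = i + n := by
  have hdvd := (Nat.modEq_iff_dvd' hij).mp h
  rcases (show j - i < n ∨ j - i = n by omega) with hlt | heq
  · have := Nat.eq_zero_of_dvd_of_lt hdvd hlt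
    omega
  · omega

namespace Equiv.Perm

variable {α : Type*} {c τ : Perm α}

theorem commute_of_eq_conj (h : c = τ * c * τ⁻¹) : Commute τ c :=
  (eq_mul_inv_iff_mul_eq.mp h).symm

theorem support_eq_map_of_conj [DecidableEq α] [Fintype α] {ι : Type*} {σ σ' : ι → Perm α}
    (hτ : ∀ i, σ' i = τ * σ i * τ⁻¹) (i : ι) :
    (σ' i).support = (σ i).support.map τ.toEmbedding := by
  rw [hτ i, support_conj]

theorem map_support_inter_of_conj [DecidableEq α] [Fintype α] {ι : Type*} {σ σ' : ι → Perm α}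
    (hτ : ∀ i, σ' i = τ * σ i * τ⁻¹) (i j : ι) :
    ((σ i).support ∩ (σ j).support).map τ.toEmbedding = (σ' i).support ∩ (σ' j).support := by
  rw [support_eq_map_of_conj hτ, support_eq_map_of_conj hτ, map_inter]

theorem map_support_eq_of_commute [DecidableEq α] [Fintype α] (hτ : Commute τ c) :
    c.support.map τ.toEmbedding = c.support := by
  rw [← support_conj, hτ.eq, mul_inv_cancel_right]

theorem IsCycle.apply_eq_self_of_commute [DecidableEq α] [Fintype α] (hc : c.IsCycle)
    (hτ : Commute τ c) {x y : α} (hx : x ∈ c.support) (hy : y ∈ c.support) (hfix : τ x = x) :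
    τ y = y := by
  obtain ⟨i, rfl⟩ := hc.exists_pow_eq (mem_support.mp hx) (mem_support.mp hy)
  rw [← mul_apply, (hτ.pow_right i).eq, mul_apply, hfix]

def IsEntryPoint (c : Perm α) (s : Finset α) (x : α) : Prop := x ∈ s ∧ c⁻¹ x ∉ s

theorem IsEntryPoint.map_of_commute {s : Finset α} {x : α} (hx : c.IsEntryPoint s x)
    (hτ : Commute τ c) : c.IsEntryPoint (s.map τ.toEmbedding) (τ x) := by
  have hinv : c⁻¹ (τ x) = τ (c⁻¹ x) := by rw [← mul_apply, ← hτ.inv_right.eq, mul_apply]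
  refine ⟨mem_map_of_mem _ hx.1, ?_⟩
  rw [hinv]
  exact fun h => hx.2 ((mem_map' τ.toEmbedding).mp h)

theorem apply_eq_of_isEntryPoint_iff {s : Finset α} {a b : α}
    (hs : ∀ x, c.IsEntryPoint s x ↔ x = a)
    (ht : ∀ x, c.IsEntryPoint (s.map τ.toEmbedding) x ↔ x = b) (hτ : Commute τ c) :
    τ a = b :=
  (ht _).mp (((hs a).mpr rfl).map_of_commute hτ)

end Equiv.Perm

theorem List.mem_support_formPerm_iff {α : Type*} [DecidableEq α] [Fintype α] {l : List α}
    (hl : l.Nodup) (h2 : 2 ≤ l.length) {x : α} : x ∈ l.formPerm.support ↔ x ∈ l :=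
  ⟨fun hx => List.mem_toFinset.mp (support_formPerm_le l hx),
    fun hx => Perm.mem_support.mpr ((formPerm_apply_mem_ne_self_iff _ hl _ hx).mpr h2)⟩

@[simp] lemma mem_ascList {a b n : ℕ} : n ∈ ascList a b ↔ a ≤ n ∧ n ≤ b := by
  simp only [ascList, List.mem_range'_1]
  omega

@[simp] lemma mem_descList {a b n : ℕ} : n ∈ descList b a ↔ a ≤ n ∧ n ≤ b := by
  simp only [descList, List.mem_reverse, List.mem_range'_1]
  omega

@[simp] lemma length_ascList (a b : ℕ) : (ascList a b).length = b + 1 - a := by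
  simp [ascList]

@[simp] lemma length_descList (b a : ℕ) : (descList b a).length = b + 1 - a := by
  simp [descList]

lemma nodup_ascList (a b : ℕ) : (ascList a b).Nodup := List.nodup_range'

lemma nodup_descList (b a : ℕ) : (descList b a).Nodup := List.nodup_reverse.mpr List.nodup_range'

lemma bounds_ascList {d a b : ℕ} (ha : 1 ≤ a) (hbd : b ≤ d) : ∀ n ∈ ascList a b, 1 ≤ n ∧ n ≤ d := by
  intro n hn
  rw [mem_ascList] at hn
  omega

section Points

variable {d : ℕ} (hd : 0 < d)

lemma toFin_val {n : ℕ} (hn : n ≤ d) : (toFin d hd n).val = n - 1 :=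
  Nat.mod_eq_of_lt (by omega)

lemma toFin_val_add_one (x : Fin d) : toFin d hd (x.val + 1) = x :=
  Fin.ext (toFin_val hd x.isLt)

lemma toFin_injOn {m n : ℕ} (hm : 1 ≤ m) (hmd : m ≤ d) (hn : 1 ≤ n) (hnd : n ≤ d)
    (h : toFin d hd m = toFin d hd n) : m = n := by
  have := congrArg Fin.val h
  rw [toFin_val hd hmd, toFin_val hd hnd] at this
  omega

variable {L : List ℕ} (hL : ∀ n ∈ L, 1 ≤ n ∧ n ≤ d)
include hL

lemma mem_map_toFin {x : Fin d} : x ∈ L.map (toFin d hd) ↔ x.val + 1 ∈ L := by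
  refine ⟨?_, fun hx => List.mem_map.mpr ⟨_, hx, toFin_val_add_one hd x⟩⟩
  intro hx
  obtain ⟨n, hn, rfl⟩ := List.mem_map.mp hx
  rwa [toFin_val hd (hL n hn).2, Nat.sub_add_cancel (hL n hn).1]

lemma nodup_map_toFin (hnd : L.Nodup) : (L.map (toFin d hd)).Nodup :=
  hnd.map_on fun m hm n hn => toFin_injOn hd (hL m hm).1 (hL m hm).2 (hL n hn).1 (hL n hn).2

lemma mem_support_formPerm_map_toFin (hnd : L.Nodup) (h2 : 2 ≤ L.length) {x : Fin d} :
    x ∈ (L.map (toFin d hd)).formPerm.support ↔ x.val + 1 ∈ L := by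
  rw [List.mem_support_formPerm_iff (nodup_map_toFin hd hL hnd) (by simpa using h2),
    mem_map_toFin hd hL]

omit hL

lemma mem_Icc_toFin {a b : ℕ} (ha : 1 ≤ a) (hab : a ≤ b) (hb : b ≤ d) {x : Fin d} :
    x ∈ Icc (toFin d hd a) (toFin d hd b) ↔ a ≤ x.val + 1 ∧ x.val + 1 ≤ b := by
  rw [mem_Icc, Fin.le_iff_val_le_val, Fin.le_iff_val_le_val, toFin_val hd (hab.trans hb),
    toFin_val hd hb]
  omega

lemma card_Icc_toFin {a b : ℕ} (ha : 1 ≤ a) (hab : a ≤ b) (hb : b ≤ d) :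
    #(Icc (toFin d hd a) (toFin d hd b)) = b + 1 - a := by
  rw [Fin.card_Icc, toFin_val hd hb, toFin_val hd (hab.trans hb)]
  omega

end Points

section Run

variable {d a b l : ℕ} (hd : 0 < d) (ha : 1 ≤ a) (hbd : b ≤ d)
include ha hbd

lemma isCycleOn_inv_formPerm_ascList :
    ((ascList a b).map (toFin d hd)).formPerm⁻¹.IsCycleOn
      ((((ascList a b).map (toFin d hd)).toFinset : Finset (Fin d)) : Set (Fin d)) := by
  rw [List.coe_toFinset]
  exact (nodup_map_toFin hd (bounds_ascList ha hbd) (nodup_ascList a b)).isCycleOn_formPerm.inv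

variable (hal : a ≤ l) (hlb : l ≤ b)
include hal hlb

lemma toFin_mem_toFinset_ascList : toFin d hd l ∈ ((ascList a b).map (toFin d hd)).toFinset := by
  rw [List.mem_toFinset, mem_map_toFin hd (bounds_ascList ha hbd), toFin_val hd (by omega),
    mem_ascList]
  omega

lemma formPerm_ascList_pow_inv_apply_mem (j : ℕ) :
    a ≤ ((((ascList a b).map (toFin d hd)).formPerm ^ j)⁻¹ (toFin d hd l)).val + 1 ∧
      ((((ascList a b).map (toFin d hd)).formPerm ^ j)⁻¹ (toFin d hd l)).val + 1 ≤ b := by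
  have hmaps := ((isCycleOn_inv_formPerm_ascList hd ha hbd).1.mapsTo.iterate j)
    (toFin_mem_toFinset_ascList hd ha hbd hal hlb)
  rwa [← Perm.coe_pow, inv_pow, mem_coe, List.mem_toFinset,
    mem_map_toFin hd (bounds_ascList ha hbd), mem_ascList] at hmaps

lemma formPerm_ascList_pow_inv_apply_eq_iff {i j : ℕ} (hij : i ≤ j) (hj : j ≤ i + (b + 1 - a)) :
    (((ascList a b).map (toFin d hd)).formPerm ^ i)⁻¹ (toFin d hd l) =
        (((ascList a b).map (toFin d hd)).formPerm ^ j)⁻¹ (toFin d hd l) ↔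
      j = i ∨ j = i + (b + 1 - a) := by
  rw [← inv_pow, ← inv_pow, (isCycleOn_inv_formPerm_ascList hd ha hbd).pow_apply_eq_pow_apply
    (toFin_mem_toFinset_ascList hd ha hbd hal hlb), List.toFinset_card_of_nodup
    (nodup_map_toFin hd (bounds_ascList ha hbd) (nodup_ascList a b)), List.length_map,
    length_ascList]
  refine ⟨fun h => h.eq_or_eq_add_of_le hij hj, ?_⟩
  rintro (rfl | rfl)
  · rfl
  · exact (Nat.add_mod_right i _).symm

end Run

def stdCycle (d : ℕ) (hd : 0 < d) (n : ℕ) : Perm (Fin d) :=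
  ((ascList 1 n).map (toFin d hd)).formPerm

section StdCycle

variable {d n : ℕ} (hd : 0 < d) (hn : 2 ≤ n) (hnd : n ≤ d)
include hn hnd

lemma mem_support_stdCycle {x : Fin d} : x ∈ (stdCycle d hd n).support ↔ x.val + 1 ≤ n := by
  rw [stdCycle, mem_support_formPerm_map_toFin hd (bounds_ascList le_rfl hnd) (nodup_ascList 1 n)
    (by simp; omega), mem_ascList]
  omega

lemma isCycle_stdCycle : (stdCycle d hd n).IsCycle :=
  List.isCycle_formPerm (nodup_map_toFin hd (bounds_ascList le_rfl hnd) (nodup_ascList 1 n))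
    (by simp; omega)

omit hn in
lemma stdCycle_apply_toFin {i : ℕ} (hi : i < n) :
    stdCycle d hd n (toFin d hd (i + 1)) = toFin d hd ((i + 1) % n + 1) := by
  have hget : ∀ j (hj : j < ((ascList 1 n).map (toFin d hd)).length),
      ((ascList 1 n).map (toFin d hd))[j] = toFin d hd (j + 1) := by
    intro j hj
    simp [ascList, add_comm]
  have := List.formPerm_apply_getElem _
    (nodup_map_toFin hd (bounds_ascList le_rfl hnd) (nodup_ascList 1 n)) i (by simp; omega)
  rw [stdCycle]
  simpa [hget] using this

lemma stdCycle_inv_apply_toFin {i : ℕ} (hi : 1 ≤ i) (hin : i ≤ n) :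
    (stdCycle d hd n)⁻¹ (toFin d hd i) = toFin d hd (if i = 1 then n else i - 1) := by
  rw [Perm.inv_eq_iff_eq]
  split_ifs with h
  · have := stdCycle_apply_toFin hd hnd (i := n - 1) (by omega)
    rw [Nat.sub_add_cancel (by omega), Nat.mod_self] at this
    rw [this, h]
  · have := stdCycle_apply_toFin hd hnd (i := i - 1 - 1) (by omega)
    rw [Nat.sub_add_cancel (by omega), Nat.mod_eq_of_lt (by omega),
      Nat.sub_add_cancel (by omega)] at this
    exact this.symm

lemma toFin_mem_support_stdCycle {i : ℕ} (hi : 1 ≤ i) (hin : i ≤ n) :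
    toFin d hd i ∈ (stdCycle d hd n).support := by
  rw [mem_support_stdCycle hd hn hnd, toFin_val hd (hin.trans hnd)]
  omega

lemma apply_toFin_eq_self_of_commute_stdCycle {τ : Perm (Fin d)} (hτ : Commute τ (stdCycle d hd n))
    {a b : ℕ} (ha : 1 ≤ a) (han : a ≤ n) (hb : 1 ≤ b) (hbn : b ≤ n)
    (hfix : τ (toFin d hd a) = toFin d hd a) : τ (toFin d hd b) = toFin d hd b :=
  (isCycle_stdCycle hd hn hnd).apply_eq_self_of_commute hτ
    (toFin_mem_support_stdCycle hd hn hnd ha han) (toFin_mem_support_stdCycle hd hn hnd hb hbn) hfix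

lemma isEntryPoint_stdCycle_Icc_iff {a b : ℕ} (ha : 1 ≤ a) (hab : a ≤ b) (hbn : b ≤ n)
    (hproper : b + 1 - a < n) {x : Fin d} :
    (stdCycle d hd n).IsEntryPoint (Icc (toFin d hd a) (toFin d hd b)) x ↔ x = toFin d hd a := by
  have hmem := fun y => mem_Icc_toFin hd (x := y) ha hab (hbn.trans hnd)
  constructor
  · rintro ⟨hx, hx'⟩
    rw [hmem] at hx
    rw [← toFin_val_add_one hd x] at hx' ⊢
    rw [stdCycle_inv_apply_toFin hd hn hnd (by omega) (by omega), hmem,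
      toFin_val hd (by split_ifs <;> omega)] at hx'
    congr 1
    split_ifs at hx' <;> omega
  · rintro rfl
    refine ⟨(hmem _).mpr ?_, ?_⟩
    · rw [toFin_val hd (by omega)]
      omega
    · rw [stdCycle_inv_apply_toFin hd hn hnd ha (by omega), hmem,
        toFin_val hd (by split_ifs <;> omega)]
      split_ifs <;> omega

lemma apply_toFin_eq_of_map_Icc {τ : Perm (Fin d)} (hτ : Commute τ (stdCycle d hd n))
    {a b a' b' : ℕ} (ha : 1 ≤ a) (hab : a ≤ b) (hbn : b ≤ n) (hproper : b + 1 - a < n)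
    (ha' : 1 ≤ a') (hab' : a' ≤ b') (hbn' : b' ≤ n) (hproper' : b' + 1 - a' < n)
    (h : (Icc (toFin d hd a) (toFin d hd b)).map τ.toEmbedding =
      Icc (toFin d hd a') (toFin d hd b')) :
    τ (toFin d hd a) = toFin d hd a' :=
  Perm.apply_eq_of_isEntryPoint_iff
    (fun _ => isEntryPoint_stdCycle_Icc_iff hd hn hnd ha hab hbn hproper)
    (fun _ => h ▸ isEntryPoint_stdCycle_Icc_iff hd hn hnd ha' hab' hbn' hproper') hτ

end StdCycle

-- The Riemann–Hurwitz relation `2d - 2 = Σ (eᵢ - 1)`, stated without truncated subtraction.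
def SortedRiemannHurwitz (d e1 e2 e3 e4 : ℕ) : Prop :=
  2 ≤ e1 ∧ e1 ≤ e2 ∧ e2 ≤ e3 ∧ e3 ≤ e4 ∧ e1 + e2 + e3 + e4 = 2 * d + 2

section FamilyII

variable {d e1 e2 e3 e4 k m : ℕ} (hd : 0 < d)

-- `FII … i` and `FI … i` are the paper's `σ_{i+1}`.
lemma FII_three : FII d hd e1 e3 e4 k m 3 = stdCycle d hd e4 := rfl

variable (hs : SortedRiemannHurwitz d e1 e2 e3 e4) (hA : AdmII d e1 e3 e4 k m)
include hs hA

lemma mem_support_FII_zero {x : Fin d} :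
    x ∈ (FII d hd e1 e3 e4 k m 0).support ↔ m ≤ x.val + 1 ∧ x.val + 1 ≤ m + e1 - 1 := by
  unfold SortedRiemannHurwitz AdmII at *
  simp only [FII, Matrix.cons_val]
  rw [mem_support_formPerm_map_toFin hd (fun n hn => by simp at hn; omega) (nodup_descList _ _)
    (by simp; omega), mem_descList]

lemma mem_support_FII_one {x : Fin d} :
    x ∈ (FII d hd e1 e3 e4 k m 1).support ↔
      (m + e1 ≤ x.val + 1 ∧ x.val + 1 ≤ d) ∨ (k ≤ x.val + 1 ∧ x.val + 1 ≤ m + d + k - e3 - e4) := by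
  unfold SortedRiemannHurwitz AdmII at *
  simp only [FII, Matrix.cons_val]
  rw [mem_support_formPerm_map_toFin hd (fun n hn => by simp at hn; omega)
    ((nodup_descList _ _).append (nodup_descList _ _) fun n h h' => by simp at h h'; omega)
    (by simp; omega), List.mem_append, mem_descList, mem_descList]

lemma support_FII_zero_inter_three :
    (FII d hd e1 e3 e4 k m 0).support ∩ (FII d hd e1 e3 e4 k m 3).support =
      Icc (toFin d hd m) (toFin d hd e4) := by
  unfold SortedRiemannHurwitz AdmII at *
  ext x
  rw [mem_inter, mem_support_FII_zero hd hs hA, FII_three, mem_support_stdCycle hd (by omega)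
    (by omega), mem_Icc_toFin hd (by omega) (by omega) (by omega)]
  omega

lemma support_FII_one_inter_three :
    (FII d hd e1 e3 e4 k m 1).support ∩ (FII d hd e1 e3 e4 k m 3).support =
      Icc (toFin d hd k) (toFin d hd (m + d + k - e3 - e4)) := by
  unfold SortedRiemannHurwitz AdmII at *
  ext x
  rw [mem_inter, mem_support_FII_one hd hs hA, FII_three, mem_support_stdCycle hd (by omega)
    (by omega), mem_Icc_toFin hd (by omega) (by omega) (by omega)]
  omega

lemma disjoint_support_FII_zero_one :
    Disjoint (FII d hd e1 e3 e4 k m 0).support (FII d hd e1 e3 e4 k m 1).support := by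
  rw [disjoint_left]
  intro x h0 h1
  rw [mem_support_FII_zero hd hs hA] at h0
  rw [mem_support_FII_one hd hs hA] at h1
  unfold SortedRiemannHurwitz AdmII at *
  omega

theorem FII_params_eq_of_conj {k' m' : ℕ} (hA' : AdmII d e1 e3 e4 k' m') {τ : Perm (Fin d)}
    (hτ : ∀ i, FII d hd e1 e3 e4 k' m' i = τ * FII d hd e1 e3 e4 k m i * τ⁻¹) :
    k = k' ∧ m = m' := by
  have hcomm : Commute τ (stdCycle d hd e4) := Perm.commute_of_eq_conj (hτ 3)
  have hY := Perm.map_support_inter_of_conj hτ 0 3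
  have hX := Perm.map_support_inter_of_conj hτ 1 3
  rw [support_FII_zero_inter_three hd hs hA, support_FII_zero_inter_three hd hs hA'] at hY
  rw [support_FII_one_inter_three hd hs hA, support_FII_one_inter_three hd hs hA'] at hX
  unfold SortedRiemannHurwitz AdmII at *
  obtain rfl : m = m' := by
    have := congrArg card hY
    rw [card_map, card_Icc_toFin hd (by omega) (by omega) (by omega),
      card_Icc_toFin hd (by omega) (by omega) (by omega)] at this
    omega
  have hfix_m : τ (toFin d hd m) = toFin d hd m :=
    apply_toFin_eq_of_map_Icc hd (by omega) (by omega) hcomm (by omega) (by omega) le_rfl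
      (by omega) (by omega) (by omega) le_rfl (by omega) hY
  have hfix_k : τ (toFin d hd k) = toFin d hd k :=
    apply_toFin_eq_self_of_commute_stdCycle hd (by omega) (by omega) hcomm (by omega) (by omega)
      (by omega) (by omega) hfix_m
  have hk : τ (toFin d hd k) = toFin d hd k' :=
    apply_toFin_eq_of_map_Icc hd (by omega) (by omega) hcomm (by omega) (by omega) (by omega)
      (by omega) (by omega) (by omega) (by omega) (by omega) hX
  exact ⟨toFin_injOn hd (by omega) (by omega) (by omega) (by omega) (hfix_k ▸ hk), rfl⟩

end FamilyII

section FamilyI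

variable {d e1 e2 e3 e4 k l : ℕ} (hd : 0 < d)

lemma FI_zero : FI d hd e1 e3 e4 k l 0 =
    ((descList d (e3 + e4 + 1 - k)).map (toFin d hd) ++
      (List.range' (d + 2 - k - e1) (e1 + e3 + e4 - k - d)).map
        (fun j => (sigmaAux d hd e3 e4 k ^ j)⁻¹ (toFin d hd l))).formPerm := rfl

lemma FI_one : FI d hd e1 e3 e4 k l 1 =
    ((ascList (e3 + e4 + 1 - k) d).map (toFin d hd) ++
      (List.range' 0 (d + 2 - k - e1)).map
        (fun j => (sigmaAux d hd e3 e4 k ^ j)⁻¹ (toFin d hd l))).formPerm := rfl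

lemma FI_two : FI d hd e1 e3 e4 k l 2 =
    ((descList k 1 ++ ascList (e4 + 1) (e3 + e4 - k)).map (toFin d hd)).formPerm := rfl

lemma FI_three : FI d hd e1 e3 e4 k l 3 = stdCycle d hd e4 := rfl

variable (hs : SortedRiemannHurwitz d e1 e2 e3 e4) (hA : AdmI d e2 e3 e4 k l)
include hs hA

lemma sigmaAux_pow_inv_apply_mem (j : ℕ) :
    k ≤ ((sigmaAux d hd e3 e4 k ^ j)⁻¹ (toFin d hd l)).val + 1 ∧
      ((sigmaAux d hd e3 e4 k ^ j)⁻¹ (toFin d hd l)).val + 1 ≤ e3 + e4 - k := by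
  unfold SortedRiemannHurwitz AdmI at *
  exact formPerm_ascList_pow_inv_apply_mem hd (by omega) (by omega) hA.2.2.2.1 hA.2.2.2.2 j

lemma sigmaAux_pow_inv_apply_eq {i j : ℕ} (hi : i ≤ e3 + e4 + 1 - 2 * k)
    (hj : j ≤ e3 + e4 + 1 - 2 * k)
    (h : (sigmaAux d hd e3 e4 k ^ i)⁻¹ (toFin d hd l) =
      (sigmaAux d hd e3 e4 k ^ j)⁻¹ (toFin d hd l)) :
    i = j ∨ (i = 0 ∧ j = e3 + e4 + 1 - 2 * k) ∨ (i = e3 + e4 + 1 - 2 * k ∧ j = 0) := by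
  unfold SortedRiemannHurwitz AdmI at *
  rcases le_total i j with hij | hji
  · have := (formPerm_ascList_pow_inv_apply_eq_iff hd (by omega) (by omega) hA.2.2.2.1 hA.2.2.2.2
      hij (by omega)).mp h
    omega
  · have := (formPerm_ascList_pow_inv_apply_eq_iff hd (by omega) (by omega) hA.2.2.2.1 hA.2.2.2.2
      hji (by omega)).mp h.symm
    omega

lemma sigmaAux_pow_inv_apply_period :
    (sigmaAux d hd e3 e4 k ^ (e3 + e4 + 1 - 2 * k))⁻¹ (toFin d hd l) = toFin d hd l := by
  unfold SortedRiemannHurwitz AdmI at *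
  have := (formPerm_ascList_pow_inv_apply_eq_iff hd (i := 0) (j := e3 + e4 + 1 - 2 * k)
    (by omega) (by omega) hA.2.2.2.1 hA.2.2.2.2 (by omega) (by omega)).mpr (by omega)
  simpa [sigmaAux] using this.symm

lemma nodup_map_toFin_append_orbit {A : List ℕ} (hAnd : A.Nodup)
    (hAb : ∀ n ∈ A, e3 + e4 - k < n ∧ n ≤ d) {s c : ℕ} (hsc : s + c ≤ e3 + e4 + 2 - 2 * k)
    (hc : c ≤ e3 + e4 + 1 - 2 * k) :
    (A.map (toFin d hd) ++
      (List.range' s c).map (fun j => (sigmaAux d hd e3 e4 k ^ j)⁻¹ (toFin d hd l))).Nodup := by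
  have horbit := sigmaAux_pow_inv_apply_mem hd hs hA
  have hinj (i j : ℕ) := sigmaAux_pow_inv_apply_eq hd hs hA (i := i) (j := j)
  have hb : ∀ n ∈ A, 1 ≤ n ∧ n ≤ d := fun n hn => ⟨by have := hAb n hn; omega, (hAb n hn).2⟩
  refine (nodup_map_toFin hd hb hAnd).append
    ((List.nodup_range').map_on fun i hi j hj h => ?_) fun x hx hx' => ?_
  · simp only [List.mem_range'_1] at hi hj
    have := hinj i j (by omega) (by omega) h
    omega
  · rw [mem_map_toFin hd hb] at hx
    obtain ⟨j, -, rfl⟩ := List.mem_map.mp hx'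
    have := horbit j
    have := hAb _ hx
    omega

lemma toFin_mem_support_FI_zero : toFin d hd l ∈ (FI d hd e1 e3 e4 k l 0).support := by
  have hperiod := sigmaAux_pow_inv_apply_period hd hs hA
  unfold SortedRiemannHurwitz AdmI at *
  rw [FI_zero, List.mem_support_formPerm_iff (nodup_map_toFin_append_orbit hd hs hA
    (nodup_descList _ _) (fun n hn => by rw [mem_descList] at hn; omega) (by omega) (by omega))
    (by simp; omega)]
  exact List.mem_append_right _
    (List.mem_map.mpr ⟨e3 + e4 + 1 - 2 * k, by simp only [List.mem_range'_1]; omega, hperiod⟩)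

lemma toFin_mem_support_FI_one : toFin d hd l ∈ (FI d hd e1 e3 e4 k l 1).support := by
  unfold SortedRiemannHurwitz AdmI at *
  rw [FI_one, List.mem_support_formPerm_iff (nodup_map_toFin_append_orbit hd hs hA
    (nodup_ascList _ _) (fun n hn => by rw [mem_ascList] at hn; omega) (by omega) (by omega))
    (by simp; omega)]
  exact List.mem_append_right _
    (List.mem_map.mpr ⟨0, by simp only [List.mem_range'_1]; omega, by simp⟩)

lemma eq_toFin_of_mem_support_FI_zero_one {x : Fin d} (h0 : x ∈ (FI d hd e1 e3 e4 k l 0).support)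
    (h1 : x ∈ (FI d hd e1 e3 e4 k l 1).support) (hx : x.val + 1 ≤ e3 + e4 - k) :
    x = toFin d hd l := by
  have hinj (i j : ℕ) := sigmaAux_pow_inv_apply_eq hd hs hA (i := i) (j := j)
  unfold SortedRiemannHurwitz AdmI at *
  rw [FI_zero] at h0
  rw [FI_one] at h1
  rcases List.mem_append.mp (List.mem_toFinset.mp (List.support_formPerm_le _ h0)) with h0 | h0
  · obtain ⟨n, hn, rfl⟩ := List.mem_map.mp h0
    rw [mem_descList] at hn
    rw [toFin_val hd (by omega)] at hx
    omega
  rcases List.mem_append.mp (List.mem_toFinset.mp (List.support_formPerm_le _ h1)) with h1 | h1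
  · obtain ⟨n, hn, rfl⟩ := List.mem_map.mp h1
    rw [mem_ascList] at hn
    rw [toFin_val hd (by omega)] at hx
    omega
  obtain ⟨i, hi, rfl⟩ := List.mem_map.mp h0
  obtain ⟨j, hj, hij⟩ := List.mem_map.mp h1
  simp only [List.mem_range'_1] at hi hj
  obtain rfl : j = 0 := by
    have := hinj i j (by omega) (by omega) hij.symm
    omega
  simpa using hij.symm

lemma FI_two_nodup_bounds :
    (descList k 1 ++ ascList (e4 + 1) (e3 + e4 - k)).Nodup ∧
      ∀ n ∈ descList k 1 ++ ascList (e4 + 1) (e3 + e4 - k), 1 ≤ n ∧ n ≤ d := by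
  unfold SortedRiemannHurwitz AdmI at *
  refine ⟨(nodup_descList _ _).append (nodup_ascList _ _) fun n h h' => ?_, fun n hn => ?_⟩
  · simp only [mem_descList, mem_ascList] at h h'
    omega
  · simp only [List.mem_append, mem_descList, mem_ascList] at hn
    omega

lemma isCycle_FI_two : (FI d hd e1 e3 e4 k l 2).IsCycle := by
  obtain ⟨hnd, hb⟩ := FI_two_nodup_bounds hs hA
  unfold SortedRiemannHurwitz AdmI at *
  exact List.isCycle_formPerm (nodup_map_toFin hd hb hnd) (by simp; omega)

lemma mem_support_FI_two {x : Fin d} :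
    x ∈ (FI d hd e1 e3 e4 k l 2).support ↔
      x.val + 1 ≤ k ∨ (e4 + 1 ≤ x.val + 1 ∧ x.val + 1 ≤ e3 + e4 - k) := by
  obtain ⟨hnd, hb⟩ := FI_two_nodup_bounds hs hA
  unfold SortedRiemannHurwitz AdmI at *
  rw [FI_two, mem_support_formPerm_map_toFin hd hb hnd (by simp; omega), List.mem_append,
    mem_descList, mem_ascList]
  omega

lemma support_FI_two_inter_three :
    (FI d hd e1 e3 e4 k l 2).support ∩ (FI d hd e1 e3 e4 k l 3).support =
      Icc (toFin d hd 1) (toFin d hd k) := by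
  ext x
  rw [mem_inter, mem_support_FI_two hd hs hA]
  unfold SortedRiemannHurwitz AdmI at *
  rw [FI_three, mem_support_stdCycle hd (by omega) (by omega),
    mem_Icc_toFin hd le_rfl (by omega) (by omega)]
  omega

lemma apply_toFin_eq_self_of_commute_FI (hdeg : e3 + e4 ≠ 2 * k) {τ : Perm (Fin d)}
    (hc3 : Commute τ (FI d hd e1 e3 e4 k l 2)) (hc4 : Commute τ (stdCycle d hd e4)) :
    τ (toFin d hd l) = toFin d hd l := by
  have hM : (Icc (toFin d hd 1) (toFin d hd k)).map τ.toEmbedding =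
      Icc (toFin d hd 1) (toFin d hd k) := by
    rw [← support_FI_two_inter_three hd hs hA, map_inter, Perm.map_support_eq_of_commute hc3,
      FI_three, Perm.map_support_eq_of_commute hc4]
  have hσ3 := isCycle_FI_two hd hs hA
  have hmem3 (x) := mem_support_FI_two hd hs hA (x := x)
  unfold SortedRiemannHurwitz AdmI at *
  have hfix1 : τ (toFin d hd 1) = toFin d hd 1 :=
    apply_toFin_eq_of_map_Icc hd (by omega) (by omega) hc4 le_rfl (by omega) (by omega)
      (by omega) le_rfl (by omega) (by omega) (by omega) hM
  rcases le_or_gt l e4 with hle | hgt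
  · exact apply_toFin_eq_self_of_commute_stdCycle hd (by omega) (by omega) hc4 le_rfl (by omega)
      (by omega) hle hfix1
  · refine hσ3.apply_eq_self_of_commute hc3 ?_ ?_ hfix1 <;>
      rw [hmem3, toFin_val hd (by omega)] <;> omega

theorem FI_params_eq_of_conj {k' l' : ℕ} (hA' : AdmI d e2 e3 e4 k' l') {τ : Perm (Fin d)}
    (hτ : ∀ i, FI d hd e1 e3 e4 k' l' i = τ * FI d hd e1 e3 e4 k l i * τ⁻¹) :
    k = k' ∧ l = l' := by
  have hM := Perm.map_support_inter_of_conj hτ 2 3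
  rw [support_FI_two_inter_three hd hs hA, support_FI_two_inter_three hd hs hA'] at hM
  have hl0 := toFin_mem_support_FI_zero hd hs hA
  have hl1 := toFin_mem_support_FI_one hd hs hA
  have hl' (x) := eq_toFin_of_mem_support_FI_zero_one hd hs hA' (x := x)
  have hfix := apply_toFin_eq_self_of_commute_FI hd hs hA
  unfold SortedRiemannHurwitz AdmI at *
  obtain rfl : k = k' := by
    have := congrArg card hM
    rwa [card_map, card_Icc_toFin hd le_rfl (by omega) (by omega),
      card_Icc_toFin hd le_rfl (by omega) (by omega)] at this
  refine ⟨rfl, ?_⟩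
  by_cases hdeg : e3 + e4 = 2 * k
  · omega
  have hfixl := hfix hdeg (Perm.commute_of_eq_conj (hτ 2)) (Perm.commute_of_eq_conj (hτ 3))
  have h0 : toFin d hd l ∈ (FI d hd e1 e3 e4 k l' 0).support := by
    rw [Perm.support_eq_map_of_conj hτ 0, ← hfixl]
    exact mem_map_of_mem _ hl0
  have h1 : toFin d hd l ∈ (FI d hd e1 e3 e4 k l' 1).support := by
    rw [Perm.support_eq_map_of_conj hτ 1, ← hfixl]
    exact mem_map_of_mem _ hl1
  exact toFin_injOn hd (by omega) (by omega) (by omega) (by omega)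
    (hl' _ h0 h1 (by rw [toFin_val hd (by omega)]; omega))

theorem FI_not_conj_FII {k' m' : ℕ} (hA' : AdmII d e1 e3 e4 k' m') {τ : Perm (Fin d)}
    (hτ : ∀ i, FII d hd e1 e3 e4 k' m' i = τ * FI d hd e1 e3 e4 k l i * τ⁻¹) : False := by
  have h0 : τ (toFin d hd l) ∈ (FII d hd e1 e3 e4 k' m' 0).support := by
    rw [Perm.support_eq_map_of_conj hτ 0]
    exact mem_map_of_mem _ (toFin_mem_support_FI_zero hd hs hA)
  have h1 : τ (toFin d hd l) ∈ (FII d hd e1 e3 e4 k' m' 1).support := by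
    rw [Perm.support_eq_map_of_conj hτ 1]
    exact mem_map_of_mem _ (toFin_mem_support_FI_one hd hs hA)
  exact disjoint_left.mp (disjoint_support_FII_zero_one hd hs hA') h0 h1

end FamilyI

theorem families_pairwise_inequivalent_general
    (d e1 e2 e3 e4 : ℕ) (hd : 0 < d)
    (h1 : 2 ≤ e1) (h12 : e1 ≤ e2) (h23 : e2 ≤ e3) (h34 : e3 ≤ e4)
    (hsum : 2 * d - 2 = (e1 - 1) + (e2 - 1) + (e3 - 1) + (e4 - 1)) :
    (∀ k l k' l' : ℕ, AdmI d e2 e3 e4 k l → AdmI d e2 e3 e4 k' l' →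
      HEquiv (FI d hd e1 e3 e4 k l) (FI d hd e1 e3 e4 k' l') → k = k' ∧ l = l') ∧
    (∀ k m k' m' : ℕ, AdmII d e1 e3 e4 k m → AdmII d e1 e3 e4 k' m' →
      HEquiv (FII d hd e1 e3 e4 k m) (FII d hd e1 e3 e4 k' m') → k = k' ∧ m = m') ∧
    (∀ k l k' m' : ℕ, AdmI d e2 e3 e4 k l → AdmII d e1 e3 e4 k' m' →
      ¬HEquiv (FI d hd e1 e3 e4 k l) (FII d hd e1 e3 e4 k' m')) := by
  have hs : SortedRiemannHurwitz d e1 e2 e3 e4 := ⟨h1, h12, h23, h34, by omega⟩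
  refine ⟨?_, ?_, ?_⟩
  · rintro k l k' l' hA hA' ⟨τ, hτ⟩
    exact FI_params_eq_of_conj hd hs hA hA' hτ
  · rintro k m k' m' hA hA' ⟨τ, hτ⟩
    exact FII_params_eq_of_conj hd hs hA hA' hτ
  · rintro k l k' m' hA hA' ⟨τ, hτ⟩
    exact FI_not_conj_FII hd hs hA hA' hτ

/-- No two of the tuples `F_I(k, ℓ)`, `F_II(k, m)` with distinct (admissible)
parameters are equivalent, and no tuple of family I is equivalent to a tuple of
family II. -/
theorem families_pairwise_inequivalent
    (d e1 e2 e3 e4 : ℕ) (hd : 0 < d)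
    (h1 : 2 ≤ e1) (h12 : e1 ≤ e2) (h23 : e2 ≤ e3) (h34 : e3 ≤ e4) (h4d : e4 ≤ d)
    (hsum : 2 * d - 2 = (e1 - 1) + (e2 - 1) + (e3 - 1) + (e4 - 1)) :
    (∀ k l k' l' : ℕ, AdmI d e2 e3 e4 k l → AdmI d e2 e3 e4 k' l' →
      HEquiv (FI d hd e1 e3 e4 k l) (FI d hd e1 e3 e4 k' l') → k = k' ∧ l = l') ∧
    (∀ k m k' m' : ℕ, AdmII d e1 e3 e4 k m → AdmII d e1 e3 e4 k' m' →
      HEquiv (FII d hd e1 e3 e4 k m) (FII d hd e1 e3 e4 k' m') → k = k' ∧ m = m') ∧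
    (∀ k l k' m' : ℕ, AdmI d e2 e3 e4 k l → AdmII d e1 e3 e4 k' m' →
      ¬HEquiv (FI d hd e1 e3 e4 k l) (FII d hd e1 e3 e4 k' m')) :=
  families_pairwise_inequivalent_general d e1 e2 e3 e4 hd h1 h12 h23 h34 hsum
end

section
/- Assume Situation (*): d > 0 and 2 ≤ e_1 ≤ e_2 ≤ e_3 ≤ e_4 ≤ d with 2d − 2 = Σ_{i=1}^4 (e_i − 1). Let A = {(k, ℓ) ∈ ℤ × ℤ : e_3+e_4−d ≤ k, k ≤ e_3, k ≤ d+1−e_2, and k ≤ ℓ ≤ e_3+e_4−k} and B = {(k, m) ∈ ℤ × ℤ : 1 ≤ k ≤ e_3+e_4−d−1, e_4−e_1+1 ≤ m ≤ d+1−e_1, and m ≤ e_4}. Then |A| + |B| = min_{1 ≤ i ≤ 4} e_i(d + 1 − e_i). -/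
lemma sum_aux (a c : ℤ) : ∀ n : ℕ, ∑ k ∈ Finset.Icc a (a + n), (c - 2*k) = (n+1) * (c - 2*a - n) := by
  intro n
  induction n with
  | zero => simp
  | succ n ih =>
    have h : Finset.Icc a (a + ((n:ℤ)+1)) = insert (a + n + 1) (Finset.Icc a (a+n)) := by
      ext x; simp; omega
    push_cast
    rw [h, Finset.sum_insert (by simp)]
    push_cast at ih
    rw [ih]; ring

set_option maxHeartbeats 1000000 in
/-- In Situation (*), the number of admissible parameters of family I plus the number
of admissible parameters of family II equals `min_i e_i (d + 1 - e_i)`. -/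
theorem parameter_count_eq_min
    (d e1 e2 e3 e4 : ℕ) (hd : 0 < d)
    (h1 : 2 ≤ e1) (h12 : e1 ≤ e2) (h23 : e2 ≤ e3) (h34 : e3 ≤ e4) (h4d : e4 ≤ d)
    (hsum : 2 * d - 2 = (e1 - 1) + (e2 - 1) + (e3 - 1) + (e4 - 1)) :
    ({p : ℤ × ℤ | (e3 : ℤ) + e4 - d ≤ p.1 ∧ p.1 ≤ e3 ∧ p.1 ≤ (d : ℤ) + 1 - e2 ∧
        p.1 ≤ p.2 ∧ p.2 ≤ (e3 : ℤ) + e4 - p.1}).ncard +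
    ({p : ℤ × ℤ | 1 ≤ p.1 ∧ p.1 ≤ (e3 : ℤ) + e4 - d - 1 ∧
        (e4 : ℤ) - e1 + 1 ≤ p.2 ∧ p.2 ≤ (d : ℤ) + 1 - e1 ∧ p.2 ≤ e4}).ncard =
    min (min (e1 * (d + 1 - e1)) (e2 * (d + 1 - e2)))
      (min (e3 * (d + 1 - e3)) (e4 * (d + 1 - e4))) := by
  have hsum' : e1 + e2 + e3 + e4 = 2 * d + 2 := by omega
  set K0 : ℤ := (e3 : ℤ) + e4 - d with hK0
  set K1 : ℤ := min (e3 : ℤ) ((d:ℤ) + 1 - e2) with hK1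
  set FA : Finset (ℤ × ℤ) :=
    (Finset.Icc K0 K1).biUnion (fun k => {k} ×ˢ Finset.Icc k ((e3:ℤ)+e4-k)) with hFA
  set FB : Finset (ℤ × ℤ) :=
    Finset.Icc (1:ℤ) ((e3:ℤ)+e4-d-1) ×ˢ
      Finset.Icc ((e4:ℤ)-e1+1) (min ((d:ℤ)+1-e1) (e4:ℤ)) with hFB
  have hAeq : ({p : ℤ × ℤ | (e3 : ℤ) + e4 - d ≤ p.1 ∧ p.1 ≤ e3 ∧ p.1 ≤ (d : ℤ) + 1 - e2 ∧
        p.1 ≤ p.2 ∧ p.2 ≤ (e3 : ℤ) + e4 - p.1}) = ↑FA := by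
    ext ⟨k, l⟩
    simp only [hFA, Set.mem_setOf_eq, Finset.coe_biUnion, Finset.mem_coe, Finset.mem_Icc,
      Set.mem_iUnion, Finset.mem_product, Finset.mem_singleton]
    constructor
    · rintro ⟨ha, hb, hc, hd', he⟩
      exact ⟨k, ⟨by omega, by omega⟩, rfl, hd', he⟩
    · rintro ⟨i, ⟨hi1, hi2⟩, rfl, hi3, hi4⟩
      refine ⟨by omega, by omega, by omega, hi3, hi4⟩
  have hBeq : ({p : ℤ × ℤ | 1 ≤ p.1 ∧ p.1 ≤ (e3 : ℤ) + e4 - d - 1 ∧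
        (e4 : ℤ) - e1 + 1 ≤ p.2 ∧ p.2 ≤ (d : ℤ) + 1 - e1 ∧ p.2 ≤ e4}) = ↑FB := by
    ext ⟨k, m⟩
    simp only [hFB, Set.mem_setOf_eq, Finset.coe_product, Set.mem_prod, Finset.mem_coe,
      Finset.mem_Icc]
    omega
  rw [hAeq, hBeq, Set.ncard_coe_finset, Set.ncard_coe_finset]
  -- cardinality of FA as an integer
  have hdisj : ∀ x ∈ Finset.Icc K0 K1, ∀ y ∈ Finset.Icc K0 K1, x ≠ y →
      Disjoint ({x} ×ˢ Finset.Icc x ((e3:ℤ)+e4-x)) ({y} ×ˢ Finset.Icc y ((e3:ℤ)+e4-y)) := by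
    intro x _ y _ hxy
    simp only [Finset.disjoint_left, Finset.mem_product, Finset.mem_singleton]
    rintro ⟨a, b⟩ ⟨rfl, -⟩ ⟨rfl, -⟩
    exact hxy rfl
  have hK01 : K0 ≤ K1 := by omega
  obtain ⟨n, hn⟩ : ∃ n : ℕ, K1 = K0 + n := ⟨(K1 - K0).toNat, by omega⟩
  have hAcard : ((FA.card : ℤ)) = ((n:ℤ)+1) * ((e3:ℤ)+e4+1 - 2*K0 - n) := by
    rw [hFA, Finset.card_biUnion hdisj]
    push_cast
    rw [show ∑ k ∈ Finset.Icc K0 K1, (({k} ×ˢ Finset.Icc k ((e3:ℤ)+e4-k)).card : ℤ)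
        = ∑ k ∈ Finset.Icc K0 K1, ((e3:ℤ)+e4+1-2*k) from ?_]
    · rw [hn, sum_aux]
    · refine Finset.sum_congr rfl (fun k hk => ?_)
      simp only [Finset.mem_Icc] at hk
      rw [Finset.card_product, Finset.card_singleton, Int.card_Icc]
      rw [one_mul]
      rw [Int.toNat_of_nonneg (by omega)]
      ring
  have hBcard : ((FB.card : ℤ)) = ((e3:ℤ)+e4-d-1) * (min ((d:ℤ)+1-e1) (e4:ℤ) - ((e4:ℤ)-e1+1) + 1) := by
    rw [hFB, Finset.card_product]
    push_cast
    rw [Int.card_Icc, Int.card_Icc]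
    rw [Int.toNat_of_nonneg (by omega), Int.toNat_of_nonneg (by omega)]
    ring
  zify [show e1 ≤ d+1 by omega, show e2 ≤ d+1 by omega, show e3 ≤ d+1 by omega,
    show e4 ≤ d+1 by omega]
  rw [hAcard, hBcard]
  have hm12 : min ((e1:ℤ) * ((d:ℤ)+1-e1)) ((e2:ℤ) * ((d:ℤ)+1-e2)) = (e1:ℤ) * ((d:ℤ)+1-e1) := by
    apply min_eq_left
    have ha : (0:ℤ) ≤ (e2:ℤ) - e1 := by omega
    have hb : (0:ℤ) ≤ (d:ℤ)+1-e1-e2 := by omega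
    nlinarith [mul_nonneg ha hb]
  have hm34 : min ((e3:ℤ) * ((d:ℤ)+1-e3)) ((e4:ℤ) * ((d:ℤ)+1-e4)) = (e4:ℤ) * ((d:ℤ)+1-e4) := by
    apply min_eq_right
    have ha : (0:ℤ) ≤ (e4:ℤ) - e3 := by omega
    have hb : (0:ℤ) ≤ (e3:ℤ)+e4-d-1 := by omega
    nlinarith [mul_nonneg ha hb]
  rw [hm12, hm34]
  clear_value FA FB
  clear hdisj hAeq hBeq hAcard hBcard hFA hFB FA FB
  clear_value K0 K1
  rcases le_or_gt ((e1:ℤ)+e4) ((d:ℤ)+1) with hc | hc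
  · have houter : (e1:ℤ)*((d:ℤ)+1-e1) ⊓ (e4:ℤ)*((d:ℤ)+1-e4) = (e1:ℤ)*((d:ℤ)+1-e1) := by
      apply min_eq_left
      have ha : (0:ℤ) ≤ (e4:ℤ)-e1 := by omega
      have hb : (0:ℤ) ≤ (d:ℤ)+1-e1-e4 := by omega
      nlinarith [mul_nonneg ha hb]
    have hmB : ((d:ℤ)+1-e1) ⊓ (e4:ℤ) = (e4:ℤ) := min_eq_right (by omega)
    have hnv : ((n:ℤ)) = (e1:ℤ) - 1 := by omega
    rw [houter, hmB, hnv, hK0]; ring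
  · have houter : (e1:ℤ)*((d:ℤ)+1-e1) ⊓ (e4:ℤ)*((d:ℤ)+1-e4) = (e4:ℤ)*((d:ℤ)+1-e4) := by
      apply min_eq_right
      have ha : (0:ℤ) ≤ (e4:ℤ)-e1 := by omega
      have hb : (0:ℤ) ≤ (e1:ℤ)+e4-d-1 := by omega
      nlinarith [mul_nonneg ha hb]
    have hmB : ((d:ℤ)+1-e1) ⊓ (e4:ℤ) = (d:ℤ)+1-e1 := min_eq_left (by omega)
    have hnv : ((n:ℤ)) = (d:ℤ) - e4 := by omega
    rw [houter, hmB, hnv, hK0]; ring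
end

section
/- Fix r ≥ 4 and integers e_1, …, e_r with e_i ≥ 2 for all i. Call a tuple (a_2, …, a_{r−2}) of positive integers admissible if each of the triples (e_1, e_2, a_2), (a_2, e_3, a_3), (a_3, e_4, a_4), …, (a_{r−3}, e_{r−2}, a_{r−2}), (a_{r−2}, e_{r−1}, e_r) satisfies: each entry of the triple is at most the sum of the other two, and the sum of the three entries is odd. Then for any two admissible tuples a = (a_2, …, a_{r−2}) and b = (b_2, …, b_{r−2}), there exist N ≥ 0 and admissible tuples c^0 = a, c^1, …, c^N = b such that for each 0 ≤ j < N, the tuples c^j and c^{j+1} differ in exactly one index. -/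
/-!
Along the chain of triples the parity of every entry of an admissible tuple is forced by the
previous one, so the pointwise maximum of two admissible tuples is again admissible, and it
suffices to connect `a ≤ b`. For that, raise by two an entry `a_i < b_i` of least value: a triple
this breaks would have been tight, and tightness together with `e ≥ 2` produces a neighbouring
entry that is still below `b` and has smaller value.
-/

/-- The condition on a triple `(x, y, z)`: each entry is at most the sum of the other
two, and the sum of the three entries is odd. -/
def TriOK (x y z : ℕ) : Prop :=
  x ≤ y + z ∧ y ≤ x + z ∧ z ≤ x + y ∧ Odd (x + y + z)

/-- Admissibility of a tuple `(a₂, …, a_{r-2})` (here `a i` is `a_{i+2}`) of positive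
integers: each of the triples `(e₁, e₂, a₂), (a₂, e₃, a₃), …, (a_{r-3}, e_{r-2},
a_{r-2}), (a_{r-2}, e_{r-1}, e_r)` satisfies `TriOK`. -/
def Admissible (r : ℕ) (hr : 4 ≤ r) (e : Fin r → ℕ) (a : Fin (r - 3) → ℕ) : Prop :=
  (∀ i, 0 < a i) ∧
  TriOK (e ⟨0, by omega⟩) (e ⟨1, by omega⟩) (a ⟨0, by omega⟩) ∧
  (∀ (i : ℕ) (h : i + 1 < r - 3),
    TriOK (a ⟨i, by omega⟩) (e ⟨i + 2, by omega⟩) (a ⟨i + 1, h⟩)) ∧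
  TriOK (a ⟨r - 4, by omega⟩) (e ⟨r - 2, by omega⟩) (e ⟨r - 1, by omega⟩)

namespace TriOK

variable {x y z u v x' z' : ℕ}

theorem symm (h : TriOK x y z) : TriOK z y x := by
  obtain ⟨h₁, h₂, h₃, h₄⟩ := h
  exact ⟨by omega, by omega, by omega, by rwa [show z + y + x = x + y + z by ring]⟩

theorem pos_right (h : TriOK x y z) : 0 < z := by
  obtain ⟨h₁, h₂, _, h₄⟩ := h
  rw [Nat.odd_iff] at h₄
  omega

theorem mod_two_eq_right (h : TriOK x y z) (h' : TriOK x' y z') (hx : x % 2 = x' % 2) :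
    z % 2 = z' % 2 := by
  simp only [TriOK, Nat.odd_iff] at h h'
  omega

theorem max (h : TriOK x y z) (h' : TriOK x' y z') (hx : x % 2 = x' % 2) :
    TriOK (max x x') y (max z z') := by
  have hz := h.mod_two_eq_right h' hx
  simp only [TriOK, Nat.odd_iff] at h h' ⊢
  omega

/-- If raising `z` by two breaks the triple, the triple was tight, `z + 1 = u + v`; then any
triple `(u', v, z')` with `z' ≥ z + 2` forces `u' > u`, while `v ≥ 2` makes `u < z`. -/
theorem add_two_or_lt (h : TriOK u v z) (h' : TriOK u' v z') (hv : 2 ≤ v)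
    (hz : z + 2 ≤ z') : TriOK u v (z + 2) ∨ u < u' ∧ u < z := by
  simp only [TriOK, Nat.odd_iff] at h h' ⊢
  omega

end TriOK

def TriChain (w : ℕ → ℕ) (n : ℕ) (x : ℕ → ℕ) : Prop :=
  ∀ i < n, TriOK (x i) (w i) (x (i + 1))

namespace TriChain

variable {w x y : ℕ → ℕ} {n : ℕ}

theorem mod_two_eq (hx : TriChain w n x) (hy : TriChain w n y) (h₀ : x 0 = y 0) :
    ∀ i ≤ n, x i % 2 = y i % 2
  | 0, _ => by rw [h₀]
  | i + 1, hi => (hx i hi).mod_two_eq_right (hy i hi) (mod_two_eq hx hy h₀ i (by omega))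

theorem sup (hx : TriChain w n x) (hy : TriChain w n y) (h₀ : x 0 = y 0) :
    TriChain w n (x ⊔ y) := fun i hi =>
  (hx i hi).max (hy i hi) (hx.mod_two_eq hy h₀ i hi.le)

theorem update (hx : TriChain w n x) {k v : ℕ} (hl : TriOK (x k) (w k) v)
    (hr : TriOK v (w (k + 1)) (x (k + 2))) : TriChain w n (Function.update x (k + 1) v) := by
  intro j hj
  by_cases hjk : j = k
  · subst hjk
    simpa using hl
  by_cases hjk' : j = k + 1
  · subst hjk'
    simpa using hr
  rw [Function.update_of_ne hjk', Function.update_of_ne (by omega)]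
  exact hx j hj

theorem exists_update_add_two (hw : ∀ i < n, 2 ≤ w i) (hx : TriChain w n x)
    (hy : TriChain w n y) (h₀ : x 0 = y 0) (hn : x n = y n) {i₀ : ℕ} (hi₀ : i₀ ≤ n)
    (hlt : x i₀ < y i₀) :
    ∃ i, 0 < i ∧ i < n ∧ x i + 2 ≤ y i ∧
      TriChain w n (Function.update x i (x i + 2)) := by
  obtain ⟨i, hi, hmin⟩ := ((Finset.range (n + 1)).filter (fun i => x i < y i)).exists_min_image
    x ⟨i₀, by simp only [Finset.mem_filter, Finset.mem_range]; omega⟩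
  simp only [Finset.mem_filter, Finset.mem_range] at hi hmin
  obtain ⟨hin, hi⟩ := hi
  have hpar := hx.mod_two_eq hy h₀ i (by omega)
  obtain _ | k := i
  · omega
  have hkn : k + 1 < n := by
    by_contra h
    obtain rfl : k + 1 = n := by omega
    omega
  have hleft : TriOK (x k) (w k) (x (k + 1) + 2) := by
    refine ((hx k (by omega)).add_two_or_lt (hy k (by omega)) (hw k (by omega))
      (by omega)).resolve_right fun hk => ?_
    have := hmin k ⟨by omega, hk.1⟩
    omega
  have hright : TriOK (x (k + 1) + 2) (w (k + 1)) (x (k + 2)) := by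
    refine (((hx (k + 1) hkn).symm.add_two_or_lt (hy (k + 1) hkn).symm (hw (k + 1) hkn)
      (by omega)).resolve_right fun hk => ?_).symm
    have := hmin (k + 1 + 1) ⟨by omega, hk.1⟩
    omega
  exact ⟨k + 1, by omega, hkn, by omega, hx.update hleft hright⟩

end TriChain

section

variable {r : ℕ} (hr : 4 ≤ r) (e : Fin r → ℕ)

/-- `(e₁, a₂, …, a_{r-2}, e_r)` indexed by `0, …, r - 2`, and constantly `e_r` beyond. -/
def extendedTuple (a : Fin (r - 3) → ℕ) (j : ℕ) : ℕ :=
  if j = 0 then e ⟨0, by omega⟩ else if h : j ≤ r - 3 then a ⟨j - 1, by omega⟩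
  else e ⟨r - 1, by omega⟩

/-- `j ↦ e_{j+2}`, the middle entry of the `j`-th triple (and `0` past `e_r`). -/
def middleEntries (j : ℕ) : ℕ :=
  if h : j + 1 < r then e ⟨j + 1, h⟩ else 0

variable {e} {a b : Fin (r - 3) → ℕ}

theorem extendedTuple_zero : extendedTuple hr e a 0 = e ⟨0, by omega⟩ := rfl

theorem extendedTuple_of_pos {j : ℕ} (h₀ : 0 < j) (hj : j ≤ r - 3) :
    extendedTuple hr e a j = a ⟨j - 1, by omega⟩ := by
  simp [extendedTuple, h₀.ne', hj]

theorem extendedTuple_succ {k : ℕ} (hk : k < r - 3) :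
    extendedTuple hr e a (k + 1) = a ⟨k, hk⟩ :=
  extendedTuple_of_pos hr k.succ_pos hk

theorem extendedTuple_sub_two : extendedTuple hr e a (r - 2) = e ⟨r - 1, by omega⟩ := by
  rw [extendedTuple, if_neg (by omega), dif_neg (by omega)]

theorem middleEntries_of_lt {j : ℕ} (hj : j + 1 < r) : middleEntries e j = e ⟨j + 1, hj⟩ :=
  dif_pos hj

theorem extendedTuple_sup :
    extendedTuple hr e (a ⊔ b) = extendedTuple hr e a ⊔ extendedTuple hr e b := by
  ext j
  simp only [extendedTuple, Pi.sup_apply]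
  split_ifs <;> simp

theorem extendedTuple_update (k : Fin (r - 3)) (v : ℕ) :
    extendedTuple hr e (Function.update a k v) =
      Function.update (extendedTuple hr e a) (k + 1) v := by
  ext j
  simp only [extendedTuple, Function.update_apply, Fin.ext_iff]
  split_ifs <;> first | rfl | omega

theorem admissible_iff_triChain :
    Admissible r hr e a ↔ TriChain (middleEntries e) (r - 2) (extendedTuple hr e a) := by
  have hx_last : extendedTuple hr e a (r - 3) = a ⟨r - 4, by omega⟩ := by
    rw [extendedTuple_of_pos hr (by omega) le_rfl]
    congr 2
  have hx_last' : extendedTuple hr e a (r - 3 + 1) = e ⟨r - 1, by omega⟩ := by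
    rw [show r - 3 + 1 = r - 2 by omega, extendedTuple_sub_two]
  have hw_last : middleEntries e (r - 3) = e ⟨r - 2, by omega⟩ := by
    rw [middleEntries_of_lt (by omega)]
    congr 2
    omega
  constructor
  · rintro ⟨-, hfirst, hmid, hlast⟩ j hj
    obtain rfl | rfl | ⟨k, rfl, hk⟩ :
        j = 0 ∨ j = r - 3 ∨ ∃ k, j = k + 1 ∧ k + 1 < r - 3 := by
      obtain _ | k := j
      · exact Or.inl rfl
      · exact if h : k + 1 = r - 3 then Or.inr (Or.inl h)
          else Or.inr (Or.inr ⟨k, rfl, by omega⟩)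
    · rw [extendedTuple_zero, extendedTuple_succ hr (by omega), middleEntries_of_lt (by omega)]
      exact hfirst
    · rwa [hx_last, hx_last', hw_last]
    · rw [extendedTuple_succ hr (by omega), extendedTuple_succ hr hk,
        middleEntries_of_lt (by omega)]
      exact hmid k hk
  · intro h
    refine ⟨fun i => ?_, ?_, fun i hi => ?_, ?_⟩
    · simpa [extendedTuple_succ hr i.2] using (h i (by omega)).pos_right
    · simpa [extendedTuple_zero, extendedTuple_succ hr (by omega : 0 < r - 3),
        middleEntries_of_lt (by omega : 0 + 1 < r)] using h 0 (by omega)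
    · simpa [extendedTuple_succ hr (by omega : i < r - 3), extendedTuple_succ hr hi,
        middleEntries_of_lt (by omega : i + 1 + 1 < r)] using h (i + 1) (by omega)
    · simpa [hx_last, hx_last', hw_last] using h (r - 3) (by omega)

end

def singleIndexMoveGraph {ι α : Type*} (s : Set (ι → α)) : SimpleGraph s where
  Adj a b := ∃! i, a.1 i ≠ b.1 i
  symm := ⟨fun _ _ h => by simpa only [ne_comm] using h⟩
  loopless := ⟨fun _ ⟨_, hi, _⟩ => hi rfl⟩

theorem singleIndexMoveGraph_adj {ι α : Type*} {s : Set (ι → α)} {a b : s} :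
    (singleIndexMoveGraph s).Adj a b ↔ ∃! i, a.1 i ≠ b.1 i :=
  Iff.rfl

theorem singleIndexMoveGraph_adj_update {ι α : Type*} [DecidableEq ι] {s : Set (ι → α)}
    {a : ι → α} (ha : a ∈ s) {i : ι} {v : α} (hv : v ≠ a i)
    (hs : Function.update a i v ∈ s) :
    (singleIndexMoveGraph s).Adj ⟨a, ha⟩ ⟨Function.update a i v, hs⟩ :=
  singleIndexMoveGraph_adj.2 ⟨i, by simpa using hv.symm, fun j hj => by
    by_contra h
    simp [Function.update_of_ne h] at hj⟩

namespace Admissible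

variable {r : ℕ} {hr : 4 ≤ r} {e : Fin r → ℕ}

theorem sup {a b : Fin (r - 3) → ℕ} (ha : Admissible r hr e a) (hb : Admissible r hr e b) :
    Admissible r hr e (a ⊔ b) := by
  rw [admissible_iff_triChain] at ha hb ⊢
  rw [extendedTuple_sup]
  exact ha.sup hb rfl

theorem exists_update_add_two {a b : Fin (r - 3) → ℕ} (he : ∀ i, 2 ≤ e i)
    (ha : Admissible r hr e a) (hb : Admissible r hr e b) {k : Fin (r - 3)} (hk : a k < b k) :
    ∃ k, a k + 2 ≤ b k ∧ Admissible r hr e (Function.update a k (a k + 2)) := by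
  rw [admissible_iff_triChain] at ha hb
  obtain ⟨i, hi₀, hin, hle, hx⟩ := ha.exists_update_add_two
    (fun j hj => by rw [middleEntries_of_lt (by omega)]; exact he _) hb rfl
    (by rw [extendedTuple_sub_two, extendedTuple_sub_two]) (i₀ := k + 1) (by omega)
    (by rwa [extendedTuple_succ hr k.2, extendedTuple_succ hr k.2])
  obtain ⟨k', rfl⟩ : ∃ k' : Fin (r - 3), i = k' + 1 :=
    ⟨⟨i - 1, by omega⟩, (Nat.sub_add_cancel hi₀).symm⟩
  rw [extendedTuple_succ hr k'.2, extendedTuple_succ hr k'.2] at hle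
  rw [extendedTuple_succ hr k'.2] at hx
  refine ⟨k', hle, ?_⟩
  rwa [admissible_iff_triChain, extendedTuple_update]

theorem reachable_of_le {a b : Fin (r - 3) → ℕ} (he : ∀ i, 2 ≤ e i)
    (ha : Admissible r hr e a) (hb : Admissible r hr e b) (hab : a ≤ b) :
    (singleIndexMoveGraph {a | Admissible r hr e a}).Reachable ⟨a, ha⟩ ⟨b, hb⟩ := by
  obtain rfl | hne := eq_or_ne a b
  · rfl
  obtain ⟨k, hk⟩ : ∃ k, a k < b k := by
    by_contra! h
    exact hne (le_antisymm hab h)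
  obtain ⟨k, hk, ha'⟩ := ha.exists_update_add_two he hb hk
  have hab' : Function.update a k (a k + 2) ≤ b := update_le_iff.2 ⟨hk, fun j _ => hab j⟩
  exact (singleIndexMoveGraph_adj_update ha (by omega) ha').reachable.trans
    (reachable_of_le he ha' hb hab')
termination_by ∑ i, (b i - a i)
decreasing_by
  have ha_le : a ≤ Function.update a k (a k + 2) :=
    le_update_iff.2 ⟨by omega, fun _ _ => le_rfl⟩
  exact Finset.sum_lt_sum (fun j _ => Nat.sub_le_sub_left (ha_le j) _)
    ⟨k, Finset.mem_univ _, by rw [Function.update_self]; omega⟩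

theorem reachable {a b : Fin (r - 3) → ℕ} (he : ∀ i, 2 ≤ e i) (ha : Admissible r hr e a)
    (hb : Admissible r hr e b) :
    (singleIndexMoveGraph {a | Admissible r hr e a}).Reachable ⟨a, ha⟩ ⟨b, hb⟩ :=
  (reachable_of_le he ha (ha.sup hb) le_sup_left).trans
    (reachable_of_le he hb (ha.sup hb) le_sup_right).symm

end Admissible

/-- Any two admissible tuples can be connected by a chain of admissible tuples in
which consecutive tuples differ in exactly one index. -/
theorem admissible_tuples_connected_by_single_index_moves
    (r : ℕ) (hr : 4 ≤ r) (e : Fin r → ℕ) (he : ∀ i, 2 ≤ e i)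
    (a b : Fin (r - 3) → ℕ)
    (ha : Admissible r hr e a) (hb : Admissible r hr e b) :
    ∃ (N : ℕ) (c : ℕ → Fin (r - 3) → ℕ),
      c 0 = a ∧ c N = b ∧ (∀ j ≤ N, Admissible r hr e (c j)) ∧
      ∀ j < N, ∃! i : Fin (r - 3), c j i ≠ c (j + 1) i := by
  obtain ⟨p⟩ := Admissible.reachable he ha hb
  exact ⟨p.length, fun j => p.getVert j, congrArg Subtype.val p.getVert_zero,
    congrArg Subtype.val p.getVert_length, fun j _ => (p.getVert j).2,
    fun j hj => singleIndexMoveGraph_adj.1 (p.adj_getVert_succ hj)⟩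
end
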